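/- arXiv:quant-ph/0002041 — 3 statements merged into one kernel-verified Lean document; each statement's English description precedes it below -/
import Mathlib

section
/- Let F be a smooth closed 2-form on ℝ^n, let Flux_{q''}(q,q') denote the integral of F over the oriented triangle with vertices q, q', q''. Then Flux_{q''}(q,q') = ∫_{q'}^{q} A(q̃, q'') dq̃, where A is the Valatin potential and the integral is along the straight line from q' to q. -/
open MeasureTheory intervalIntegral

private lemma sum_antisym_zero {n : ℕ} (M : Fin n → Fin n → ℝ)
    (hM : ∀ j k, M j k = - M k j) (c : Fin n → ℝ) :
    ∑ j, ∑ k, M j k * c k * c j = 0 := by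
  have h1 : ∑ j, ∑ k, M j k * c k * c j = ∑ j, ∑ k, M k j * c j * c k :=
    Finset.sum_comm
  have h2 : ∑ j, ∑ k, M k j * c j * c k = - ∑ j, ∑ k, M j k * c k * c j := by
    rw [← Finset.sum_neg_distrib]
    refine Finset.sum_congr rfl fun j _ => ?_
    rw [← Finset.sum_neg_distrib]
    refine Finset.sum_congr rfl fun k _ => ?_
    rw [hM k j]; ring
  linarith [h1.trans h2]

/-- The flux of a closed 2-form `F` through the oriented triangle with
vertices `q, q', q''` equals the straight-line integral `∫_{q'}^{q} A(q̃, q'') dq̃`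
of the Valatin potential based at `q''`. -/
theorem flux_eq_line_integral_of_valatin {n : ℕ}
    (F : Fin n → Fin n → (Fin n → ℝ) → ℝ)
    (hF : ∀ j k, ContDiff ℝ (⊤ : ℕ∞) (F j k))
    (hanti : ∀ j k q, F j k q = - F k j q)
    (hclosed : ∀ j k l (q : Fin n → ℝ),
      fderiv ℝ (F k l) q (Pi.single j 1) + fderiv ℝ (F l j) q (Pi.single k 1)
        + fderiv ℝ (F j k) q (Pi.single l 1) = 0)
    (A : Fin n → (Fin n → ℝ) → (Fin n → ℝ) → ℝ)
    (hA : ∀ j (q q' : Fin n → ℝ),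
      A j q q' = ∫ t in (0:ℝ)..1, t * ∑ k, F j k (q' + t • (q - q')) * (q k - q' k)) :
    ∀ (q q' q'' : Fin n → ℝ),
      (∫ s in (0:ℝ)..1, ∫ t in (0:ℝ)..s,
          ∑ j, ∑ k, F j k (q'' + s • (q' - q'') + t • (q - q'))
            * (q' k - q'' k) * (q j - q' j))
        = ∫ t in (0:ℝ)..1, ∑ j, A j (q' + t • (q - q')) q'' * (q j - q' j) := by
  intro q q' q''
  have hFc : ∀ j k, Continuous (F j k) := fun j k => (hF j k).continuous
  -- Step 1: rewrite the line-integral integrand using `hA`, linearity, antisymmetry.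
  have key : ∀ t : ℝ, ∑ j, A j (q' + t • (q - q')) q'' * (q j - q' j)
      = ∫ τ in (0:ℝ)..1, τ * ∑ j, ∑ k,
          F j k (q'' + τ • (q' - q'') + (τ * t) • (q - q'))
            * (q' k - q'' k) * (q j - q' j) := by
    intro t
    have expand : ∀ (X : Fin n → ℝ) (τ : ℝ),
        ∑ j, (τ * ∑ k, F j k X * ((q' + t • (q - q')) k - q'' k)) * (q j - q' j)
          = τ * (∑ j, ∑ k, F j k X * (q' k - q'' k) * (q j - q' j))
            + (τ * t) * (∑ j, ∑ k, F j k X * (q k - q' k) * (q j - q' j)) := by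
      intro X τ
      rw [Finset.mul_sum, Finset.mul_sum, ← Finset.sum_add_distrib]
      refine Finset.sum_congr rfl fun j _ => ?_
      rw [Finset.mul_sum, Finset.mul_sum, Finset.mul_sum, Finset.sum_mul,
        ← Finset.sum_add_distrib]
      refine Finset.sum_congr rfl fun k _ => ?_
      have hc : (q' + t • (q - q')) k - q'' k = (q' k - q'' k) + t * (q k - q' k) := by
        simp only [Pi.add_apply, Pi.sub_apply, Pi.smul_apply, smul_eq_mul]; ring
      rw [hc]; ring
    calc ∑ j, A j (q' + t • (q - q')) q'' * (q j - q' j)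
        = ∑ j, ∫ τ in (0:ℝ)..1,
            (τ * ∑ k, F j k (q'' + τ • (q' + t • (q - q') - q''))
              * ((q' + t • (q - q')) k - q'' k)) * (q j - q' j) := by
          refine Finset.sum_congr rfl fun j _ => ?_
          rw [hA, ← intervalIntegral.integral_mul_const]
      _ = ∫ τ in (0:ℝ)..1, ∑ j,
            (τ * ∑ k, F j k (q'' + τ • (q' + t • (q - q') - q''))
              * ((q' + t • (q - q')) k - q'' k)) * (q j - q' j) := by
          refine (intervalIntegral.integral_finset_sum fun j _ => ?_).symm
          apply Continuous.intervalIntegrable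
          refine ((continuous_id.mul (continuous_finset_sum _ fun k _ => ?_)).mul
            continuous_const)
          exact ((hFc j k).comp (by fun_prop)).mul continuous_const
      _ = ∫ τ in (0:ℝ)..1, τ * ∑ j, ∑ k,
            F j k (q'' + τ • (q' - q'') + (τ * t) • (q - q'))
              * (q' k - q'' k) * (q j - q' j) := by
          refine intervalIntegral.integral_congr fun τ _ => ?_
          have hY : q'' + τ • (q' + t • (q - q') - q'')
              = q'' + τ • (q' - q'') + (τ * t) • (q - q') := by
            funext i
            simp only [Pi.add_apply, Pi.sub_apply, Pi.smul_apply, smul_eq_mul]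
            ring
          simp only [hY]
          rw [expand (q'' + τ • (q' - q'') + (τ * t) • (q - q')) τ]
          have hz := sum_antisym_zero
            (fun j k => F j k (q'' + τ • (q' - q'') + (τ * t) • (q - q')))
            (fun j k => hanti j k _) (fun i => q i - q' i)
          rw [hz, mul_zero, add_zero]
  -- Step 2: Fubini swap on the square.
  have hHc : Continuous (fun p : ℝ × ℝ => p.2 * ∑ j, ∑ k,
      F j k (q'' + p.2 • (q' - q'') + (p.2 * p.1) • (q - q'))
        * (q' k - q'' k) * (q j - q' j)) := by
    refine continuous_snd.mul (continuous_finset_sum _ fun j _ =>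
      continuous_finset_sum _ fun k _ => ?_)
    exact (((hFc j k).comp (by fun_prop)).mul continuous_const).mul continuous_const
  have hint : Integrable
      (Function.uncurry fun t τ => τ * ∑ j, ∑ k,
        F j k (q'' + τ • (q' - q'') + (τ * t) • (q - q'))
          * (q' k - q'' k) * (q j - q' j))
      ((volume.restrict (Set.Ioc (0:ℝ) 1)).prod (volume.restrict (Set.Ioc (0:ℝ) 1))) := by
    rw [Measure.prod_restrict]
    exact (hHc.continuousOn.integrableOn_compact (isCompact_Icc.prod isCompact_Icc)).mono_set
      (Set.prod_mono Set.Ioc_subset_Icc_self Set.Ioc_subset_Icc_self)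
  have hswap : (∫ t in (0:ℝ)..1, ∫ τ in (0:ℝ)..1, τ * ∑ j, ∑ k,
        F j k (q'' + τ • (q' - q'') + (τ * t) • (q - q'))
          * (q' k - q'' k) * (q j - q' j))
      = ∫ τ in (0:ℝ)..1, ∫ t in (0:ℝ)..1, τ * ∑ j, ∑ k,
        F j k (q'' + τ • (q' - q'') + (τ * t) • (q - q'))
          * (q' k - q'' k) * (q j - q' j) := by
    simp only [intervalIntegral.integral_of_le zero_le_one]
    exact integral_integral_swap hint
  -- Step 3: substitution u = τ * t in the inner integral.
  have sub : ∀ τ : ℝ, (∫ t in (0:ℝ)..1, τ * ∑ j, ∑ k,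
        F j k (q'' + τ • (q' - q'') + (τ * t) • (q - q'))
          * (q' k - q'' k) * (q j - q' j))
      = ∫ u in (0:ℝ)..τ, ∑ j, ∑ k,
        F j k (q'' + τ • (q' - q'') + u • (q - q'))
          * (q' k - q'' k) * (q j - q' j) := by
    intro τ
    rw [intervalIntegral.integral_const_mul]
    have h := intervalIntegral.smul_integral_comp_mul_left (a := 0) (b := 1)
      (fun u => ∑ j, ∑ k, F j k (q'' + τ • (q' - q'') + u • (q - q'))
        * (q' k - q'' k) * (q j - q' j)) τ
    simp only [mul_zero, mul_one] at h
    rw [smul_eq_mul] at h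
    exact h
  calc (∫ s in (0:ℝ)..1, ∫ t in (0:ℝ)..s,
          ∑ j, ∑ k, F j k (q'' + s • (q' - q'') + t • (q - q'))
            * (q' k - q'' k) * (q j - q' j))
      = ∫ τ in (0:ℝ)..1, ∫ t in (0:ℝ)..1, τ * ∑ j, ∑ k,
          F j k (q'' + τ • (q' - q'') + (τ * t) • (q - q'))
            * (q' k - q'' k) * (q j - q' j) := by
        exact (intervalIntegral.integral_congr fun τ _ => (sub τ).symm)
    _ = ∫ t in (0:ℝ)..1, ∫ τ in (0:ℝ)..1, τ * ∑ j, ∑ k,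
          F j k (q'' + τ • (q' - q'') + (τ * t) • (q - q'))
            * (q' k - q'' k) * (q j - q' j) := hswap.symm
    _ = ∫ t in (0:ℝ)..1, ∑ j, A j (q' + t • (q - q')) q'' * (q j - q' j) :=
        intervalIntegral.integral_congr fun t _ => (key t).symm
end

section
/- With Flux_{q''}(q,q') the flux of a smooth closed 2-form F through the triangle with vertices q, q', q'', one has ∂/∂q Flux_{q''}(q,q') = A(q,q'') - A(q,q'), where A is the Valatin potential. -/
set_option maxHeartbeats 1000000
set_option synthInstance.maxHeartbeats 400000

open MeasureTheory intervalIntegral Metric Set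
open scoped Interval

/-- Differentiation under the interval integral sign, continuous data, real parameter. -/
lemma hasDerivAt_param_intervalIntegral (k k' : ℝ → ℝ → ℝ) (a b u : ℝ)
    (hk : Continuous fun p : ℝ × ℝ => k p.1 p.2)
    (hk' : Continuous fun p : ℝ × ℝ => k' p.1 p.2)
    (hd : ∀ x t, HasDerivAt (fun y => k y t) (k' x t) x) :
    HasDerivAt (fun x => ∫ t in a..b, k x t) (∫ t in a..b, k' u t) u := by
  obtain ⟨C, hC⟩ := ((isCompact_closedBall u 1).prod isCompact_uIcc).exists_bound_of_continuousOn
    (hk'.continuousOn (s := closedBall u 1 ×ˢ uIcc a b))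
  refine (intervalIntegral.hasDerivAt_integral_of_dominated_loc_of_deriv_le
    (F := fun x t => k x t) (F' := fun x t => k' x t) (bound := fun _ => C)
    (ball_mem_nhds u one_pos) ?_ ?_ ?_ ?_ ?_ ?_).2
  · exact Filter.Eventually.of_forall fun x =>
      ((hk.comp (continuous_const.prodMk continuous_id)).aestronglyMeasurable)
  · exact ((hk.comp (continuous_const.prodMk continuous_id)) : Continuous fun t => k u t
      ).intervalIntegrable a b
  · exact ((hk'.comp (continuous_const.prodMk continuous_id)) : Continuous fun t => k' u t
      ).aestronglyMeasurable
  · refine Filter.Eventually.of_forall fun t ht x hx => ?_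
    exact hC (x, t) ⟨ball_subset_closedBall hx, uIoc_subset_uIcc ht⟩
  · exact intervalIntegrable_const
  · exact Filter.Eventually.of_forall fun t _ x _ => hd x t
/-- Leibniz rule with moving upper bound, continuous data. -/
lemma leibniz_moving (k k' : ℝ → ℝ → ℝ) (a u : ℝ)
    (hk : Continuous fun p : ℝ × ℝ => k p.1 p.2)
    (hk' : Continuous fun p : ℝ × ℝ => k' p.1 p.2)
    (hd : ∀ x t, HasDerivAt (fun y => k y t) (k' x t) x) :
    HasDerivAt (fun x => ∫ t in a..x, k x t) (k u u + ∫ t in a..u, k' u t) u := by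
  have hkx : ∀ x : ℝ, Continuous fun t => k x t := fun x =>
    hk.comp (continuous_const.prodMk continuous_id)
  have hG : HasDerivAt (fun x => ∫ t in a..u, k x t) (∫ t in a..u, k' u t) u :=
    hasDerivAt_param_intervalIntegral k k' a u u hk hk' hd
  rw [hasDerivAt_iff_isLittleO]
  have key : ∀ x : ℝ, (∫ t in a..x, k x t) - (∫ t in a..u, k u t)
      - (x - u) • (k u u + ∫ t in a..u, k' u t)
      = ((∫ t in a..u, k x t) - (∫ t in a..u, k u t) - (x - u) • (∫ t in a..u, k' u t))
        + ((∫ t in u..x, k x t) - (x - u) • k u u) := by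
    intro x
    have hsplit : (∫ t in a..u, k x t) + (∫ t in u..x, k x t) = ∫ t in a..x, k x t :=
      intervalIntegral.integral_add_adjacent_intervals ((hkx x).intervalIntegrable a u)
        ((hkx x).intervalIntegrable u x)
    rw [← hsplit]; simp only [smul_eq_mul]; ring
  have h2 : (fun x : ℝ => (∫ t in u..x, k x t) - (x - u) • k u u) =o[nhds u]
      fun x => x - u := by
    rw [Asymptotics.isLittleO_iff]
    intro ε hε
    have hcont : ContinuousAt (fun p : ℝ × ℝ => k p.1 p.2) (u, u) := hk.continuousAt
    rw [Metric.continuousAt_iff] at hcont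
    obtain ⟨δ, hδ, hδ'⟩ := hcont ε hε
    rw [Metric.eventually_nhds_iff]
    refine ⟨δ, hδ, fun x hx => ?_⟩
    have heq : (∫ t in u..x, k x t) - (x - u) • k u u
        = ∫ t in u..x, (k x t - k u u) := by
      rw [intervalIntegral.integral_sub ((hkx x).intervalIntegrable u x)
        (intervalIntegrable_const), intervalIntegral.integral_const]
    rw [heq]
    have hb : ∀ t ∈ Ι u x, ‖k x t - k u u‖ ≤ ε := by
      intro t ht
      have ht' : |t - u| ≤ |x - u| := by
        rcases ht with ⟨h1, h2⟩
        rcases le_total u x with h | h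
        · rw [abs_of_nonneg (by simp [inf_eq_left.2 h] at h1; linarith),
            abs_of_nonneg (by linarith)]
          simp [sup_eq_right.2 h] at h2; linarith
        · simp [inf_eq_right.2 h] at h1
          simp [sup_eq_left.2 h] at h2
          rw [abs_of_nonpos (by linarith), abs_of_nonpos (by linarith)]; linarith
      have : dist ((x, t)) ((u, u)) < δ := by
        rw [Prod.dist_eq]
        simp only [Real.dist_eq]
        exact max_lt hx (lt_of_le_of_lt ht' hx)
      exact le_of_lt (hδ' this)
    calc ‖∫ t in u..x, (k x t - k u u)‖ ≤ ε * |x - u| :=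
          intervalIntegral.norm_integral_le_of_norm_le_const hb
      _ = ε * ‖x - u‖ := by rw [Real.norm_eq_abs]
  have h1 := hasDerivAt_iff_isLittleO.1 hG
  have := h1.add h2
  exact this.congr' (Filter.Eventually.of_forall fun x => (key x).symm) (by rfl)
lemma mem_Icc01_of_uIoc {b t : ℝ} (hb : b ∈ Icc (0:ℝ) 1) (ht : t ∈ Ι (0:ℝ) b) :
    t ∈ Icc (0:ℝ) 1 := by
  rw [uIoc_of_le hb.1] at ht
  exact ⟨le_of_lt ht.1, le_trans ht.2 hb.2⟩

lemma hasFDerivAt_double {E : Type*} [NormedAddCommGroup E] [NormedSpace ℝ E] [ProperSpace E]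
    (f : ℝ → ℝ → E → ℝ) (f' : ℝ → ℝ → E → E →L[ℝ] ℝ) (q : E)
    (hfc : Continuous fun p : ℝ × ℝ × E => f p.1 p.2.1 p.2.2)
    (hf'c : Continuous fun p : ℝ × ℝ × E => f' p.1 p.2.1 p.2.2)
    (hder : ∀ s t x, HasFDerivAt (fun y => f s t y) (f' s t x) x) :
    HasFDerivAt (fun x => ∫ s in (0:ℝ)..1, ∫ t in (0:ℝ)..s, f s t x)
      (∫ s in (0:ℝ)..1, ∫ t in (0:ℝ)..s, f' s t q) q := by
  obtain ⟨C, hC⟩ := (((isCompact_Icc (a := (0:ℝ)) (b := 1)).prod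
      ((isCompact_Icc (a := (0:ℝ)) (b := 1)).prod
        (isCompact_closedBall q 2)))).exists_bound_of_continuousOn hf'c.continuousOn
  have hC0 : 0 ≤ C := le_trans (norm_nonneg _) (hC (0, 0, q)
    ⟨⟨le_refl 0, zero_le_one⟩, ⟨le_refl 0, zero_le_one⟩, mem_closedBall_self (by norm_num)⟩)
  have h01 : (1:ℝ) ∈ Icc (0:ℝ) 1 := ⟨zero_le_one, le_refl 1⟩
  have hinner : ∀ s ∈ Ι (0:ℝ) 1, ∀ x₀ ∈ ball q 1,
      HasFDerivAt (fun x => ∫ t in (0:ℝ)..s, f s t x) (∫ t in (0:ℝ)..s, f' s t x₀) x₀ := by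
    intro s hs x₀ hx₀
    have hs' : s ∈ Icc (0:ℝ) 1 := mem_Icc01_of_uIoc h01 hs
    refine intervalIntegral.hasFDerivAt_integral_of_dominated_of_fderiv_le (μ := volume)
      (F' := fun x t => f' s t x) (bound := fun _ => C) (ball_mem_nhds x₀ one_pos) ?_ ?_ ?_ ?_ ?_ ?_
    · exact Filter.Eventually.of_forall fun x =>
        (hfc.comp (continuous_const.prodMk
          (continuous_id.prodMk continuous_const))).aestronglyMeasurable
    · exact (hfc.comp (continuous_const.prodMk
        (continuous_id.prodMk continuous_const)) :
          Continuous fun t => f s t x₀).intervalIntegrable 0 s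
    · exact (hf'c.comp (continuous_const.prodMk
        (continuous_id.prodMk continuous_const)) :
          Continuous fun t => f' s t x₀).aestronglyMeasurable
    · refine Filter.Eventually.of_forall fun t ht x hx => ?_
      have ht' : t ∈ Icc (0:ℝ) 1 := mem_Icc01_of_uIoc hs' ht
      have hx' : x ∈ closedBall q 2 := by
        rw [mem_closedBall]
        calc dist x q ≤ dist x x₀ + dist x₀ q := dist_triangle _ _ _
          _ ≤ 1 + 1 := add_le_add (le_of_lt (mem_ball.1 hx)) (le_of_lt (mem_ball.1 hx₀))
          _ ≤ 2 := by norm_num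
      exact hC (s, t, x) ⟨hs', ht', hx'⟩
    · exact intervalIntegrable_const
    · exact Filter.Eventually.of_forall fun t _ x _ => hder s t x
  refine intervalIntegral.hasFDerivAt_integral_of_dominated_of_fderiv_le (μ := volume)
    (F' := fun x s => ∫ t in (0:ℝ)..s, f' s t x) (bound := fun _ => C) (ball_mem_nhds q one_pos) ?_ ?_ ?_ ?_ ?_ ?_
  · refine Filter.Eventually.of_forall fun x => ?_
    exact (intervalIntegral.continuous_parametric_intervalIntegral_of_continuous
      (f := fun s t => f s t x)
      (hfc.comp (continuous_fst.prodMk (continuous_snd.prodMk continuous_const)))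
      continuous_id).aestronglyMeasurable
  · exact (intervalIntegral.continuous_parametric_intervalIntegral_of_continuous
      (f := fun s t => f s t q)
      (hfc.comp (continuous_fst.prodMk (continuous_snd.prodMk continuous_const)))
      continuous_id).intervalIntegrable 0 1
  · exact (intervalIntegral.continuous_parametric_intervalIntegral_of_continuous
      (f := fun s t => f' s t q)
      (hf'c.comp (continuous_fst.prodMk (continuous_snd.prodMk continuous_const)))
      continuous_id).aestronglyMeasurable
  · refine Filter.Eventually.of_forall fun s hs x hx => ?_
    have hs' : s ∈ Icc (0:ℝ) 1 := mem_Icc01_of_uIoc h01 hs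
    have hb : ∀ t ∈ Ι (0:ℝ) s, ‖f' s t x‖ ≤ C := by
      intro t ht
      have ht' : t ∈ Icc (0:ℝ) 1 := mem_Icc01_of_uIoc hs' ht
      have hx' : x ∈ closedBall q 2 :=
        closedBall_subset_closedBall (by norm_num) (ball_subset_closedBall hx)
      exact hC (s, t, x) ⟨hs', ht', hx'⟩
    calc ‖∫ t in (0:ℝ)..s, f' s t x‖ ≤ C * |s - 0| :=
          intervalIntegral.norm_integral_le_of_norm_le_const hb
      _ ≤ C * 1 := by
          apply mul_le_mul_of_nonneg_left _ hC0
          rw [sub_zero, abs_of_nonneg hs'.1]; exact hs'.2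
      _ = C := mul_one C
  · exact intervalIntegrable_const
  · exact Filter.Eventually.of_forall fun s hs x hx => hinner s hs x hx

lemma fderiv_double_apply {E : Type*} [NormedAddCommGroup E] [NormedSpace ℝ E] [ProperSpace E]
    (f : ℝ → ℝ → E → ℝ) (f' : ℝ → ℝ → E → E →L[ℝ] ℝ) (q : E) (v : E)
    (hfc : Continuous fun p : ℝ × ℝ × E => f p.1 p.2.1 p.2.2)
    (hf'c : Continuous fun p : ℝ × ℝ × E => f' p.1 p.2.1 p.2.2)
    (hder : ∀ s t x, HasFDerivAt (fun y => f s t y) (f' s t x) x) :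
    fderiv ℝ (fun x => ∫ s in (0:ℝ)..1, ∫ t in (0:ℝ)..s, f s t x) q v
      = ∫ s in (0:ℝ)..1, ∫ t in (0:ℝ)..s, f' s t q v := by
  rw [(hasFDerivAt_double f f' q hfc hf'c hder).fderiv]
  have hint : IntervalIntegrable (fun s => ∫ t in (0:ℝ)..s, f' s t q) volume 0 1 :=
    (intervalIntegral.continuous_parametric_intervalIntegral_of_continuous
      (f := fun s t => f' s t q)
      (hf'c.comp (continuous_fst.prodMk (continuous_snd.prodMk continuous_const)))
      continuous_id).intervalIntegrable 0 1
  rw [ContinuousLinearMap.intervalIntegral_apply hint v]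
  refine intervalIntegral.integral_congr fun s _ => ?_
  exact ContinuousLinearMap.intervalIntegral_apply
    ((hf'c.comp (continuous_const.prodMk (continuous_id.prodMk continuous_const)) :
      Continuous fun t => f' s t q).intervalIntegrable 0 s) v
lemma stepB (φ ψ Φ' Ψ' D : ℝ → ℝ → ℝ)
    (hφ : Continuous fun p : ℝ × ℝ => φ p.1 p.2)
    (hψ : Continuous fun p : ℝ × ℝ => ψ p.1 p.2)
    (hΦ' : Continuous fun p : ℝ × ℝ => Φ' p.1 p.2)
    (hΨ' : Continuous fun p : ℝ × ℝ => Ψ' p.1 p.2)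
    (hφt : ∀ s t, HasDerivAt (fun τ => φ s τ) (Φ' s t) t)
    (hψs : ∀ s t, HasDerivAt (fun σ => ψ σ t) (Ψ' s t) s)
    (hid : ∀ s t, D s t = t * Φ' s t - t * Ψ' s t + φ s t) :
    ∫ s in (0:ℝ)..1, ∫ t in (0:ℝ)..s, D s t
      = (∫ s in (0:ℝ)..1, s * (φ s s + ψ s s)) - ∫ t in (0:ℝ)..1, t * ψ 1 t := by
  -- continuity of various slices
  have hcφ : ∀ s : ℝ, Continuous fun t => φ s t := fun s =>
    hφ.comp (continuous_const.prodMk continuous_id)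
  have hcΦ' : ∀ s : ℝ, Continuous fun t => t * Φ' s t := fun s =>
    continuous_id.mul (hΦ'.comp (continuous_const.prodMk continuous_id))
  have hcΨ' : ∀ s : ℝ, Continuous fun t => t * Ψ' s t := fun s =>
    continuous_id.mul (hΨ'.comp (continuous_const.prodMk continuous_id))
  -- inner integral via FTC
  have hInner : ∀ s : ℝ, ∫ t in (0:ℝ)..s, D s t
      = s * φ s s - ∫ t in (0:ℝ)..s, t * Ψ' s t := by
    intro s
    have h1 : ∀ t ∈ uIcc (0:ℝ) s, HasDerivAt (fun τ => τ * φ s τ)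
        (1 * φ s t + t * Φ' s t) t := fun t _ => (hasDerivAt_id t).mul (hφt s t)
    have hFTC : ∫ t in (0:ℝ)..s, (1 * φ s t + t * Φ' s t) = s * φ s s - 0 * φ s 0 :=
      intervalIntegral.integral_eq_sub_of_hasDerivAt h1
        (((continuous_const.mul (hcφ s)).add (hcΦ' s)).intervalIntegrable 0 s)
    have hsplit : ∫ t in (0:ℝ)..s, D s t
        = (∫ t in (0:ℝ)..s, (1 * φ s t + t * Φ' s t)) - ∫ t in (0:ℝ)..s, t * Ψ' s t := by
      rw [← intervalIntegral.integral_sub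
        (((continuous_const.fun_mul (hcφ s)).fun_add (hcΦ' s)).intervalIntegrable 0 s)
        ((hcΨ' s).intervalIntegrable 0 s)]
      refine intervalIntegral.integral_congr fun t _ => ?_
      rw [hid s t]; ring
    rw [hsplit, hFTC]; ring
  -- Leibniz rule for H s = ∫ t in 0..s, t * ψ s t
  have hH : ∀ u : ℝ, HasDerivAt (fun s => ∫ t in (0:ℝ)..s, t * ψ s t)
      (u * ψ u u + ∫ t in (0:ℝ)..u, t * Ψ' u t) u := by
    intro u
    exact leibniz_moving (fun x t => t * ψ x t) (fun x t => t * Ψ' x t) 0 u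
      (continuous_snd.mul (hψ.comp (continuous_fst.prodMk continuous_snd))
        : Continuous fun p : ℝ × ℝ => p.2 * ψ p.1 p.2)
      (continuous_snd.mul (hΨ'.comp (continuous_fst.prodMk continuous_snd))
        : Continuous fun p : ℝ × ℝ => p.2 * Ψ' p.1 p.2)
      (fun x t => (hψs x t).const_mul t)
  -- outer computation
  have hHcont : Continuous fun s : ℝ => ∫ t in (0:ℝ)..s, t * Ψ' s t :=
    intervalIntegral.continuous_parametric_intervalIntegral_of_continuous
      (f := fun s t => t * Ψ' s t)
      (continuous_snd.mul (hΨ'.comp (continuous_fst.prodMk continuous_snd)))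
      continuous_id
  have hsφcont : Continuous fun s : ℝ => s * φ s s :=
    continuous_id.mul (hφ.comp (continuous_id.prodMk continuous_id))
  have hsψcont : Continuous fun s : ℝ => s * ψ s s :=
    continuous_id.mul (hψ.comp (continuous_id.prodMk continuous_id))
  have hFTC2 : ∫ s in (0:ℝ)..1, (s * ψ s s + ∫ t in (0:ℝ)..s, t * Ψ' s t)
      = (∫ t in (0:ℝ)..1, t * ψ 1 t) - ∫ t in (0:ℝ)..0, t * ψ 0 t := by
    exact intervalIntegral.integral_eq_sub_of_hasDerivAt (fun u _ => hH u)
      ((hsψcont.add hHcont).intervalIntegrable 0 1)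
  have hzero : (∫ t in (0:ℝ)..0, t * ψ 0 t) = 0 := intervalIntegral.integral_same (μ := (volume : MeasureTheory.Measure ℝ)) (a := (0:ℝ))
  have houter2 : ∫ s in (0:ℝ)..1, ∫ t in (0:ℝ)..s, t * Ψ' s t
      = (∫ t in (0:ℝ)..1, t * ψ 1 t) - ∫ s in (0:ℝ)..1, s * ψ s s := by
    have : ∫ s in (0:ℝ)..1, (s * ψ s s + ∫ t in (0:ℝ)..s, t * Ψ' s t)
        = (∫ s in (0:ℝ)..1, s * ψ s s) + ∫ s in (0:ℝ)..1, ∫ t in (0:ℝ)..s, t * Ψ' s t :=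
      intervalIntegral.integral_add (hsψcont.intervalIntegrable 0 1)
        (hHcont.intervalIntegrable 0 1)
    rw [hFTC2, hzero] at this
    linarith [this]
  calc ∫ s in (0:ℝ)..1, ∫ t in (0:ℝ)..s, D s t
      = ∫ s in (0:ℝ)..1, (s * φ s s - ∫ t in (0:ℝ)..s, t * Ψ' s t) :=
        intervalIntegral.integral_congr fun s _ => hInner s
    _ = (∫ s in (0:ℝ)..1, s * φ s s) - ∫ s in (0:ℝ)..1, ∫ t in (0:ℝ)..s, t * Ψ' s t :=
        intervalIntegral.integral_sub (hsφcont.intervalIntegrable 0 1)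
          (hHcont.intervalIntegrable 0 1)
    _ = (∫ s in (0:ℝ)..1, s * φ s s) + (∫ s in (0:ℝ)..1, s * ψ s s)
          - ∫ t in (0:ℝ)..1, t * ψ 1 t := by rw [houter2]; ring
    _ = (∫ s in (0:ℝ)..1, s * (φ s s + ψ s s)) - ∫ t in (0:ℝ)..1, t * ψ 1 t := by
        rw [← intervalIntegral.integral_add (hsφcont.intervalIntegrable 0 1)
          (hsψcont.intervalIntegrable 0 1)]
        congr 1
        refine intervalIntegral.integral_congr fun s _ => ?_
        ring
lemma hLsum {n : ℕ} (L : (Fin n → ℝ) →L[ℝ] ℝ) (m : Fin n → ℝ) :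
    L m = ∑ a, m a * L (Pi.single a 1) := by
  have h2 : ∀ a : Fin n, (fun i => if a = i then (1:ℝ) else 0) = Pi.single a 1 := by
    intro a; funext i; simp [Pi.single_apply, eq_comm]
  have := L.toLinearMap.pi_apply_eq_sum_univ m
  simpa [smul_eq_mul, h2] using this

lemma Dkey {n : ℕ} (u : Fin n → Fin n → ℝ) (L : Fin n → Fin n → (Fin n → ℝ) →L[ℝ] ℝ)
    (v w : Fin n → ℝ) (t : ℝ) (j : Fin n)
    (hsw : ∀ a b, L a b (Pi.single j 1) = L j b (Pi.single a 1) - L j a (Pi.single b 1)) :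
    (∑ a, ∑ b, ((u a b * v b) • (ContinuousLinearMap.proj a : (Fin n → ℝ) →L[ℝ] ℝ)
        + w a • (v b • (t • L a b)))) (Pi.single j 1)
      = t * (∑ b, L j b w * v b) - t * (∑ a, L j a v * w a) + ∑ b, u j b * v b := by
  have expand : (∑ a, ∑ b, ((u a b * v b) • (ContinuousLinearMap.proj a : (Fin n → ℝ) →L[ℝ] ℝ)
        + w a • (v b • (t • L a b)))) (Pi.single j 1)
      = ∑ a, ∑ b, ((u a b * v b) * ((Pi.single j 1 : Fin n → ℝ) a)
        + w a * (v b * (t * (L j b (Pi.single a 1) - L j a (Pi.single b 1))))) := by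
    simp only [ContinuousLinearMap.coe_sum', Finset.sum_apply,
      ContinuousLinearMap.add_apply, ContinuousLinearMap.smul_apply,
      ContinuousLinearMap.proj_apply, smul_eq_mul, hsw]
  rw [expand]
  have split : ∑ a, ∑ b, ((u a b * v b) * ((Pi.single j 1 : Fin n → ℝ) a)
        + w a * (v b * (t * (L j b (Pi.single a 1) - L j a (Pi.single b 1)))))
      = (∑ a, ∑ b, (u a b * v b) * ((Pi.single j 1 : Fin n → ℝ) a))
        + ((∑ a, ∑ b, w a * v b * t * L j b (Pi.single a 1))
          - ∑ a, ∑ b, w a * v b * t * L j a (Pi.single b 1)) := by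
    rw [← Finset.sum_sub_distrib, ← Finset.sum_add_distrib]
    refine Finset.sum_congr rfl fun a _ => ?_
    rw [← Finset.sum_sub_distrib, ← Finset.sum_add_distrib]
    refine Finset.sum_congr rfl fun b _ => ?_
    ring
  rw [split]
  have p1 : (∑ a, ∑ b, (u a b * v b) * ((Pi.single j 1 : Fin n → ℝ) a)) = ∑ b, u j b * v b := by
    simp [Pi.single_apply, Finset.sum_ite_eq]
  have p2 : (∑ a, ∑ b, w a * v b * t * L j b (Pi.single a 1)) = t * (∑ b, L j b w * v b) := by
    rw [Finset.sum_comm, Finset.mul_sum]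
    refine Finset.sum_congr rfl fun b _ => ?_
    rw [hLsum (L j b) w, Finset.sum_mul, Finset.mul_sum]
    refine Finset.sum_congr rfl fun a _ => ?_
    ring
  have p3 : (∑ a, ∑ b, w a * v b * t * L j a (Pi.single b 1)) = t * (∑ a, L j a v * w a) := by
    rw [Finset.mul_sum]
    refine Finset.sum_congr rfl fun a _ => ?_
    rw [hLsum (L j a) v, Finset.sum_mul, Finset.mul_sum]
    refine Finset.sum_congr rfl fun b _ => ?_
    ring
  rw [p1, p2, p3]
  ring

set_option maxHeartbeats 1600000 in
/-- The gradient in `q` of the flux `Flux_{q''}(q,q')` of a closed 2-form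
through the triangle with vertices `q, q', q''` equals `A(q,q'') - A(q,q')`,
where `A` is the Valatin potential. -/
theorem grad_flux_eq_valatin_difference {n : ℕ}
    (F : Fin n → Fin n → (Fin n → ℝ) → ℝ)
    (hF : ∀ j k, ContDiff ℝ (⊤ : ℕ∞) (F j k))
    (hanti : ∀ j k q, F j k q = - F k j q)
    (hclosed : ∀ j k l (q : Fin n → ℝ),
      fderiv ℝ (F k l) q (Pi.single j 1) + fderiv ℝ (F l j) q (Pi.single k 1)
        + fderiv ℝ (F j k) q (Pi.single l 1) = 0)
    (A : Fin n → (Fin n → ℝ) → (Fin n → ℝ) → ℝ)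
    (hA : ∀ j (q q' : Fin n → ℝ),
      A j q q' = ∫ t in (0:ℝ)..1, t * ∑ k, F j k (q' + t • (q - q')) * (q k - q' k)) :
    ∀ (q q' q'' : Fin n → ℝ) (j : Fin n),
      fderiv ℝ (fun x => ∫ s in (0:ℝ)..1, ∫ t in (0:ℝ)..s,
          ∑ a, ∑ b, F a b (q'' + s • (q' - q'') + t • (x - q'))
            * (q' b - q'' b) * (x a - q' a)) q (Pi.single j 1)
        = A j q q'' - A j q q' := by
  intro q q' q'' j
  have hFc : ∀ a b, Continuous (F a b) := fun a b => (hF a b).continuous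
  have hFd : ∀ a b (y : Fin n → ℝ), HasFDerivAt (F a b) (fderiv ℝ (F a b) y) y :=
    fun a b y => ((hF a b).differentiable (by simp) y).hasFDerivAt
  have hGc : ∀ a b, Continuous (fderiv ℝ (F a b)) :=
    fun a b => (hF a b).continuous_fderiv (by simp)
  have hPcont : Continuous (fun p : ℝ × ℝ × (Fin n → ℝ) =>
      q'' + p.1 • (q' - q'') + p.2.1 • (p.2.2 - q')) := by fun_prop
  have hP2 : Continuous (fun p : ℝ × ℝ =>
      q'' + p.1 • (q' - q'') + p.2 • (q - q')) := by fun_prop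
  have hfcont : Continuous (fun p : ℝ × ℝ × (Fin n → ℝ) =>
      ∑ a, ∑ b, F a b (q'' + p.1 • (q' - q'') + p.2.1 • (p.2.2 - q'))
        * (q' b - q'' b) * (p.2.2 a - q' a)) := by
    apply continuous_finset_sum; intro a _
    apply continuous_finset_sum; intro b _
    exact (((hFc a b).comp hPcont).mul continuous_const).mul
      (((continuous_apply a).comp (continuous_snd.comp continuous_snd)).sub continuous_const)
  obtain ⟨f', hf'def⟩ : ∃ g : ℝ → ℝ → (Fin n → ℝ) → (Fin n → ℝ) →L[ℝ] ℝ, g = fun s t x =>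
    ∑ a, ∑ b,
      ((F a b (q'' + s • (q' - q'') + t • (x - q')) * (q' b - q'' b)) •
          (ContinuousLinearMap.proj a : (Fin n → ℝ) →L[ℝ] ℝ)
        + (x a - q' a) • ((q' b - q'' b) •
            (t • fderiv ℝ (F a b) (q'' + s • (q' - q'') + t • (x - q'))))) := ⟨_, rfl⟩
  have hder : ∀ (s t : ℝ) (x : Fin n → ℝ),
      HasFDerivAt (fun y => ∑ a, ∑ b, F a b (q'' + s • (q' - q'') + t • (y - q'))
        * (q' b - q'' b) * (y a - q' a)) (f' s t x) x := by
    intro s t x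
    rw [hf'def]
    apply HasFDerivAt.fun_sum; intro a _
    apply HasFDerivAt.fun_sum; intro b _
    have h1 : HasFDerivAt (fun y : Fin n → ℝ => q'' + s • (q' - q'') + t • (y - q'))
        (t • ContinuousLinearMap.id ℝ (Fin n → ℝ)) x :=
      (((hasFDerivAt_id x).sub_const q').const_smul t).const_add (q'' + s • (q' - q''))
    have h2 : HasFDerivAt (fun y : Fin n → ℝ => F a b (q'' + s • (q' - q'') + t • (y - q')))
        (t • fderiv ℝ (F a b) (q'' + s • (q' - q'') + t • (x - q'))) x := by
      have := (hFd a b (q'' + s • (q' - q'') + t • (x - q'))).comp x h1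
      refine this.congr_fderiv ?_
      ext y
      simp
    have h4 : HasFDerivAt (fun y : Fin n → ℝ => y a - q' a)
        (ContinuousLinearMap.proj a : (Fin n → ℝ) →L[ℝ] ℝ) x :=
      ((ContinuousLinearMap.proj a : (Fin n → ℝ) →L[ℝ] ℝ).hasFDerivAt).sub_const (q' a)
    exact (h2.mul_const (q' b - q'' b)).mul h4
  have hf'cont : Continuous (fun p : ℝ × ℝ × (Fin n → ℝ) => f' p.1 p.2.1 p.2.2) := by
    rw [hf'def]
    apply continuous_finset_sum; intro a _
    apply continuous_finset_sum; intro b _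
    apply Continuous.add
    · exact ((((hFc a b).comp hPcont).mul continuous_const)).smul continuous_const
    · exact (((continuous_apply a).comp (continuous_snd.comp continuous_snd)).sub
        continuous_const).smul (continuous_const.fun_smul
          ((continuous_fst.comp continuous_snd).fun_smul ((hGc a b).comp hPcont)))
  have hkey : fderiv ℝ (fun x => ∫ s in (0:ℝ)..1, ∫ t in (0:ℝ)..s,
      ∑ a, ∑ b, F a b (q'' + s • (q' - q'') + t • (x - q'))
        * (q' b - q'' b) * (x a - q' a)) q (Pi.single j 1)
      = ∫ s in (0:ℝ)..1, ∫ t in (0:ℝ)..s, f' s t q (Pi.single j 1) :=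
    fderiv_double_apply _ f' q (Pi.single j 1) hfcont hf'cont hder
  rw [hkey]
  -- the closedness identity, in directional form
  have hsw : ∀ (y : Fin n → ℝ) (a b : Fin n),
      fderiv ℝ (F a b) y (Pi.single j 1)
        = fderiv ℝ (F j b) y (Pi.single a 1) - fderiv ℝ (F j a) y (Pi.single b 1) := by
    intro y a b
    have h := hclosed j a b y
    have hba : F b j = fun z => -F j b z := funext fun z => hanti b j z
    rw [hba, fderiv_fun_neg] at h
    simp only [ContinuousLinearMap.neg_apply] at h
    linarith
  -- derivative identities for the slice functions
  have hφt : ∀ s t : ℝ, HasDerivAt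
      (fun τ => ∑ b, F j b (q'' + s • (q' - q'') + τ • (q - q')) * (q' b - q'' b))
      (∑ b, fderiv ℝ (F j b) (q'' + s • (q' - q'') + t • (q - q')) (q - q')
        * (q' b - q'' b)) t := by
    intro s t
    apply HasDerivAt.fun_sum; intro b _
    have hcurve : HasDerivAt (fun τ : ℝ => q'' + s • (q' - q'') + τ • (q - q')) (q - q') t := by
      simpa using ((hasDerivAt_id t).smul_const (q - q')).const_add (q'' + s • (q' - q''))
    exact (HasFDerivAt.comp_hasDerivAt t (hFd j b _) hcurve).mul_const _
  have hψs : ∀ s t : ℝ, HasDerivAt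
      (fun σ => ∑ a, F j a (q'' + σ • (q' - q'') + t • (q - q')) * (q a - q' a))
      (∑ a, fderiv ℝ (F j a) (q'' + s • (q' - q'') + t • (q - q')) (q' - q'')
        * (q a - q' a)) s := by
    intro s t
    apply HasDerivAt.fun_sum; intro a _
    have hcurve : HasDerivAt (fun σ : ℝ => q'' + σ • (q' - q'') + t • (q - q')) (q' - q'') s := by
      simpa using (((hasDerivAt_id s).smul_const (q' - q'')).const_add q'').add_const
        (t • (q - q'))
    exact (HasFDerivAt.comp_hasDerivAt s (hFd j a _) hcurve).mul_const _
  -- continuity of slice functions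
  have cφ : Continuous (fun p : ℝ × ℝ =>
      ∑ b, F j b (q'' + p.1 • (q' - q'') + p.2 • (q - q')) * (q' b - q'' b)) := by
    apply continuous_finset_sum; intro b _
    exact ((hFc j b).comp hP2).mul continuous_const
  have cψ : Continuous (fun p : ℝ × ℝ =>
      ∑ a, F j a (q'' + p.1 • (q' - q'') + p.2 • (q - q')) * (q a - q' a)) := by
    apply continuous_finset_sum; intro a _
    exact ((hFc j a).comp hP2).mul continuous_const
  have cΦ' : Continuous (fun p : ℝ × ℝ =>
      ∑ b, fderiv ℝ (F j b) (q'' + p.1 • (q' - q'') + p.2 • (q - q')) (q - q')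
        * (q' b - q'' b)) := by
    apply continuous_finset_sum; intro b _
    exact (((ContinuousLinearMap.apply ℝ ℝ (q - q')).continuous.comp
      ((hGc j b).comp hP2)).mul continuous_const)
  have cΨ' : Continuous (fun p : ℝ × ℝ =>
      ∑ a, fderiv ℝ (F j a) (q'' + p.1 • (q' - q'') + p.2 • (q - q')) (q' - q'')
        * (q a - q' a)) := by
    apply continuous_finset_sum; intro a _
    exact (((ContinuousLinearMap.apply ℝ ℝ (q' - q'')).continuous.comp
      ((hGc j a).comp hP2)).mul continuous_const)
  -- the key pointwise identity
  have hid : ∀ s t : ℝ, f' s t q (Pi.single j 1)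
      = t * (∑ b, fderiv ℝ (F j b) (q'' + s • (q' - q'') + t • (q - q')) (q - q')
          * (q' b - q'' b))
        - t * (∑ a, fderiv ℝ (F j a) (q'' + s • (q' - q'') + t • (q - q')) (q' - q'')
          * (q a - q' a))
        + ∑ b, F j b (q'' + s • (q' - q'') + t • (q - q')) * (q' b - q'' b) := by
    intro s t
    simp only [hf'def]
    have hd := Dkey (fun a b => F a b (q'' + s • (q' - q'') + t • (q - q')))
      (fun a b => fderiv ℝ (F a b) (q'' + s • (q' - q'') + t • (q - q')))
      (q' - q'') (q - q') t j
      (fun a b => hsw (q'' + s • (q' - q'') + t • (q - q')) a b)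
    simpa [Pi.sub_apply] using hd
  -- the main integral computation
  have hstep := stepB
    (fun s t => ∑ b, F j b (q'' + s • (q' - q'') + t • (q - q')) * (q' b - q'' b))
    (fun s t => ∑ a, F j a (q'' + s • (q' - q'') + t • (q - q')) * (q a - q' a))
    (fun s t => ∑ b, fderiv ℝ (F j b) (q'' + s • (q' - q'') + t • (q - q')) (q - q')
      * (q' b - q'' b))
    (fun s t => ∑ a, fderiv ℝ (F j a) (q'' + s • (q' - q'') + t • (q - q')) (q' - q'')
      * (q a - q' a))
    (fun s t => f' s t q (Pi.single j 1)) cφ cψ cΦ' cΨ' hφt hψs hid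
  rw [hstep]
  -- identify the two resulting integrals with the Valatin potential
  have e1 : (∫ s in (0:ℝ)..1, s * ((∑ b, F j b (q'' + s • (q' - q'') + s • (q - q'))
        * (q' b - q'' b)) + ∑ a, F j a (q'' + s • (q' - q'') + s • (q - q')) * (q a - q' a)))
      = A j q q'' := by
    rw [hA j q q'']
    refine intervalIntegral.integral_congr fun s _ => ?_
    have hpt : q'' + s • (q' - q'') + s • (q - q') = q'' + s • (q - q'') := by module
    rw [hpt]
    have hsum : (∑ b, F j b (q'' + s • (q - q'')) * (q' b - q'' b))
        + (∑ a, F j a (q'' + s • (q - q'')) * (q a - q' a))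
        = ∑ k, F j k (q'' + s • (q - q'')) * (q k - q'' k) := by
      rw [← Finset.sum_add_distrib]
      exact Finset.sum_congr rfl fun k _ => by ring
    rw [hsum]
  have e2 : (∫ t in (0:ℝ)..1, t * ∑ a, F j a (q'' + (1:ℝ) • (q' - q'') + t • (q - q'))
        * (q a - q' a)) = A j q q' := by
    rw [hA j q q']
    refine intervalIntegral.integral_congr fun t _ => ?_
    have hpt : q'' + (1:ℝ) • (q' - q'') + t • (q - q') = q' + t • (q - q') := by module
    rw [hpt]
  rw [e1, e2]
end

section
/- Let F be a smooth closed 2-form on ℝ^n and define the phase Φ((q₂,u₂),(q₁,u₁)) = (1/ℏ) ∫_{Δ(q,q₂,q₁)} F on composable elements of the saddle groupoid on Tℝ^n (where (q₂,u₂)∘(q₁,u₁) = (q, u₂+u₁) iff q₁ + u₁/2 = q₂ - u₂/2, with q = q₁ + u₂/2 the midpoint of the third side, and Δ(q,q₂,q₁) is the triangle whose side midpoints are q, q₂, q₁). Then Φ is a groupoid 2-cocycle: Φ(d, b∘c) - Φ(d∘b, c) + Φ(b,c) - Φ(d,b) = 0 for all composable b, c, d, and Φ(b,c) = -Φ(c^{-1},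 b^{-1}). -/
open MeasureTheory intervalIntegral

/-- Flux of the 2-form with components `F j k` through the oriented affine triangle
with vertices `v0, v1, v2`. -/
noncomputable def triFlux {n : ℕ} (F : Fin n → Fin n → (Fin n → ℝ) → ℝ)
    (v0 v1 v2 : Fin n → ℝ) : ℝ :=
  ∫ s in (0:ℝ)..1, ∫ t in (0:ℝ)..s,
    ∑ j, ∑ k, F j k (v0 + s • (v1 - v0) + t • (v2 - v1)) * (v1 k - v0 k) * (v2 j - v1 j)

/-- Composability in the saddle groupoid on `Tℝⁿ`:
`(q₂,u₂)` and `(q₁,u₁)` are composable iff `q₁ + u₁/2 = q₂ - u₂/2`. -/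
def SaddleComposable {n : ℕ} (b c : (Fin n → ℝ) × (Fin n → ℝ)) : Prop :=
  c.1 + (1/2 : ℝ) • c.2 = b.1 - (1/2 : ℝ) • b.2

/-- Product in the saddle groupoid: `(q₂,u₂)∘(q₁,u₁) = (q₁ + u₂/2, u₂ + u₁)`. -/
noncomputable def saddleMul {n : ℕ} (b c : (Fin n → ℝ) × (Fin n → ℝ)) : (Fin n → ℝ) × (Fin n → ℝ) :=
  (c.1 + (1/2 : ℝ) • b.2, b.2 + c.2)

/-- Inverse in the saddle groupoid: `(q,u)⁻¹ = (q,-u)`. -/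
def saddleInv {n : ℕ} (b : (Fin n → ℝ) × (Fin n → ℝ)) : (Fin n → ℝ) × (Fin n → ℝ) :=
  (b.1, -b.2)

namespace MagAux

open Set Function



lemma integrable_rect {f : ℝ → ℝ → ℝ} (hf : Continuous (Function.uncurry f))
    (a b c d : ℝ) :
    Integrable (Function.uncurry f)
      ((volume.restrict (Ioc a b)).prod (volume.restrict (Ioc c d))) := by
  rw [Measure.prod_restrict]
  have h1 : IntegrableOn (Function.uncurry f) (Icc a b ×ˢ Icc c d)
      (volume.prod volume) := by
    rw [← Measure.volume_eq_prod]
    exact hf.continuousOn.integrableOn_compact (isCompact_Icc.prod isCompact_Icc)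
  exact h1.mono_set (Set.prod_mono Set.Ioc_subset_Icc_self Set.Ioc_subset_Icc_self)

lemma rect_swap {f : ℝ → ℝ → ℝ} (hf : Continuous (Function.uncurry f))
    {a b c d : ℝ} (hab : a ≤ b) (hcd : c ≤ d) :
    ∫ x in a..b, ∫ y in c..d, f x y = ∫ y in c..d, ∫ x in a..b, f x y := by
  rw [intervalIntegral.integral_of_le hab, intervalIntegral.integral_of_le hcd]
  simp_rw [intervalIntegral.integral_of_le hcd, intervalIntegral.integral_of_le hab]
  exact MeasureTheory.integral_integral_swap (integrable_rect hf a b c d)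

lemma tri_swap {f : ℝ → ℝ → ℝ} (hf : Continuous (Function.uncurry f)) :
    ∫ s in (0:ℝ)..1, ∫ t in (0:ℝ)..s, f s t = ∫ t in (0:ℝ)..1, ∫ s in t..1, f s t := by
  classical
  set g : ℝ → ℝ → ℝ := fun s t => if t ≤ s then f s t else 0 with hg
  have hfs : ∀ s : ℝ, Continuous (fun t => f s t) := fun s =>
    hf.comp (continuous_const.prodMk continuous_id)
  have hft : ∀ t : ℝ, Continuous (fun s => f s t) := fun t =>
    hf.comp (continuous_id.prodMk continuous_const)
  have hgs : ∀ s a b : ℝ, IntervalIntegrable (g s) volume a b := by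
    intro s a b
    have hrepr : g s = (Iic s).indicator (fun t => f s t) := by
      funext t; simp [hg, Set.indicator_apply, Set.mem_Iic]
    rw [hrepr, intervalIntegrable_iff]
    exact (intervalIntegrable_iff.mp ((hfs s).intervalIntegrable a b)).indicator
      measurableSet_Iic
  have hgt : ∀ t a b : ℝ, IntervalIntegrable (fun s => g s t) volume a b := by
    intro t a b
    have hrepr : (fun s => g s t) = (Ici t).indicator (fun s => f s t) := by
      funext s; simp [hg, Set.indicator_apply, Set.mem_Ici]
    rw [hrepr, intervalIntegrable_iff]
    exact (intervalIntegrable_iff.mp ((hft t).intervalIntegrable a b)).indicator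
      measurableSet_Ici
  have claim1 : ∀ s ∈ Icc (0:ℝ) 1, ∫ t in (0:ℝ)..s, f s t = ∫ t in (0:ℝ)..1, g s t := by
    intro s hs
    have h1 : ∫ t in (0:ℝ)..s, f s t = ∫ t in (0:ℝ)..s, g s t := by
      apply integral_congr
      intro t ht
      rw [Set.uIcc_of_le hs.1] at ht
      simp [hg, ht.2]
    have h2 : ∫ t in s..1, g s t = 0 := by
      rw [integral_of_le hs.2]
      rw [MeasureTheory.setIntegral_congr_fun measurableSet_Ioc
        (g := fun _ => (0:ℝ)) (fun t ht => by simp [hg, not_le.mpr ht.1])]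
      simp
    have h3 := integral_add_adjacent_intervals (hgs s 0 s) (hgs s s 1)
    rw [h1, ← h3, h2, add_zero]
  have claim2 : ∀ t ∈ Icc (0:ℝ) 1, ∫ s in t..1, f s t = ∫ s in (0:ℝ)..1, g s t := by
    intro t ht
    have h1 : ∫ s in t..1, f s t = ∫ s in t..1, g s t := by
      apply integral_congr
      intro s hs
      rw [Set.uIcc_of_le ht.2] at hs
      simp [hg, hs.1]
    have h2 : ∫ s in (0:ℝ)..t, g s t = 0 := by
      rw [integral_of_le ht.1, MeasureTheory.integral_Ioc_eq_integral_Ioo]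
      rw [MeasureTheory.setIntegral_congr_fun measurableSet_Ioo
        (g := fun _ => (0:ℝ)) (fun s hs => by simp [hg, not_le.mpr hs.2])]
      simp
    have h3 := integral_add_adjacent_intervals (hgt t 0 t) (hgt t t 1)
    rw [h1, ← h3, h2, zero_add]
  have hgind : Function.uncurry g =
      ({p : ℝ × ℝ | p.2 ≤ p.1}).indicator (Function.uncurry f) := by
    funext p
    simp [Function.uncurry, Set.indicator_apply, hg]
  have hmeas : MeasurableSet {p : ℝ × ℝ | p.2 ≤ p.1} :=
    (isClosed_le continuous_snd continuous_fst).measurableSet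
  have hgint : Integrable (Function.uncurry g)
      ((volume.restrict (Ioc (0:ℝ) 1)).prod (volume.restrict (Ioc (0:ℝ) 1))) := by
    rw [hgind]
    exact (integrable_rect hf 0 1 0 1).indicator hmeas
  calc ∫ s in (0:ℝ)..1, ∫ t in (0:ℝ)..s, f s t
      = ∫ s in (0:ℝ)..1, ∫ t in (0:ℝ)..1, g s t := by
        apply integral_congr
        intro s hs
        rw [Set.uIcc_of_le zero_le_one] at hs
        exact claim1 s hs
    _ = ∫ t in (0:ℝ)..1, ∫ s in (0:ℝ)..1, g s t := by
        rw [intervalIntegral.integral_of_le (zero_le_one' ℝ)]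
        simp_rw [intervalIntegral.integral_of_le (zero_le_one' ℝ)]
        exact MeasureTheory.integral_integral_swap hgint
    _ = ∫ t in (0:ℝ)..1, ∫ s in t..1, f s t := by
        apply integral_congr
        intro t ht
        rw [Set.uIcc_of_le zero_le_one] at ht
        exact (claim2 t ht).symm


variable {n : ℕ}




noncomputable def Gf (F : Fin n → Fin n → (Fin n → ℝ) → ℝ) (x u v : Fin n → ℝ) : ℝ :=
  ∑ j, ∑ k, F j k x * u k * v j

noncomputable def DGf (F : Fin n → Fin n → (Fin n → ℝ) → ℝ) (x w u v : Fin n → ℝ) : ℝ :=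
  ∑ j, ∑ k, fderiv ℝ (F j k) x w * u k * v j

lemma continuous_Gf {α : Type*} [TopologicalSpace α] {F : Fin n → Fin n → (Fin n → ℝ) → ℝ}
    (hF : ∀ j k, ContDiff ℝ (⊤ : ℕ∞) (F j k)) {x u v : α → Fin n → ℝ}
    (hx : Continuous x) (hu : Continuous u) (hv : Continuous v) :
    Continuous fun a => Gf F (x a) (u a) (v a) := by
  unfold Gf
  apply continuous_finset_sum; intro j _
  apply continuous_finset_sum; intro k _
  exact ((((hF j k).continuous).comp hx).mul ((continuous_apply k).comp hu)).mul
    ((continuous_apply j).comp hv)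

lemma continuous_DGf {α : Type*} [TopologicalSpace α] {F : Fin n → Fin n → (Fin n → ℝ) → ℝ}
    (hF : ∀ j k, ContDiff ℝ (⊤ : ℕ∞) (F j k)) {x w u v : α → Fin n → ℝ}
    (hx : Continuous x) (hw : Continuous w) (hu : Continuous u) (hv : Continuous v) :
    Continuous fun a => DGf F (x a) (w a) (u a) (v a) := by
  unfold DGf
  apply continuous_finset_sum; intro j _
  apply continuous_finset_sum; intro k _
  exact ((Continuous.clm_apply (((hF j k).continuous_fderiv (by simp)).comp hx) hw).mul
    ((continuous_apply k).comp hu)).mul ((continuous_apply j).comp hv)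

lemma Gf_antisymm {F : Fin n → Fin n → (Fin n → ℝ) → ℝ}
    (hanti : ∀ j k q, F j k q = - F k j q) (x u v : Fin n → ℝ) :
    Gf F x u v = - Gf F x v u := by
  unfold Gf
  rw [Finset.sum_comm, ← Finset.sum_neg_distrib]
  apply Finset.sum_congr rfl; intro k _
  rw [← Finset.sum_neg_distrib]
  apply Finset.sum_congr rfl; intro j _
  rw [hanti j k x]; ring

lemma Gf_add_mid {F : Fin n → Fin n → (Fin n → ℝ) → ℝ} (x u u' v : Fin n → ℝ) :
    Gf F x u v + Gf F x u' v = Gf F x (u + u') v := by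
  unfold Gf
  rw [← Finset.sum_add_distrib]
  apply Finset.sum_congr rfl; intro j _
  rw [← Finset.sum_add_distrib]
  apply Finset.sum_congr rfl; intro k _
  simp [Pi.add_apply]; ring

lemma Gf_neg_mid {F : Fin n → Fin n → (Fin n → ℝ) → ℝ} (x u v : Fin n → ℝ) :
    Gf F x (-u) v = - Gf F x u v := by
  unfold Gf
  rw [← Finset.sum_neg_distrib]
  apply Finset.sum_congr rfl; intro j _
  rw [← Finset.sum_neg_distrib]
  apply Finset.sum_congr rfl; intro k _
  rw [Pi.neg_apply]; ring

lemma fderiv_pi_apply {f : (Fin n → ℝ) → ℝ} (hf : Differentiable ℝ f)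
    (x w : Fin n → ℝ) :
    fderiv ℝ f x w = ∑ a, w a * fderiv ℝ f x (Pi.single a 1) := by
  have hw : ∑ a, w a • (Pi.single a 1 : Fin n → ℝ) = w := by
    funext i
    simp [Finset.sum_apply, Pi.single_apply]
  conv_lhs => rw [← hw]
  rw [map_sum]
  simp [smul_eq_mul]

lemma sum_rot {h : Fin n → Fin n → Fin n → ℝ} :
    ∑ a, ∑ b, ∑ c, h a b c = ∑ b, ∑ c, ∑ a, h a b c := by
  rw [Finset.sum_comm]
  exact Finset.sum_congr rfl fun b _ => Finset.sum_comm

lemma DGf_expand {F : Fin n → Fin n → (Fin n → ℝ) → ℝ}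
    (hF : ∀ j k, ContDiff ℝ (⊤ : ℕ∞) (F j k)) (x w u v : Fin n → ℝ) :
    DGf F x w u v = ∑ p : Fin n × Fin n × Fin n,
      w p.1 * u p.2.1 * v p.2.2 * fderiv ℝ (F p.2.2 p.2.1) x (Pi.single p.1 1) := by
  unfold DGf
  rw [Fintype.sum_prod_type]
  simp_rw [Fintype.sum_prod_type]
  have h1 : ∀ j k : Fin n, fderiv ℝ (F j k) x w * u k * v j
      = ∑ a, w a * u k * v j * fderiv ℝ (F j k) x (Pi.single a 1) := by
    intro j k
    rw [fderiv_pi_apply ((hF j k).differentiable (by simp)), Finset.sum_mul, Finset.sum_mul]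
    apply Finset.sum_congr rfl; intro a _; ring
  calc ∑ j, ∑ k, fderiv ℝ (F j k) x w * u k * v j
      = ∑ j, ∑ k, ∑ a, w a * u k * v j * fderiv ℝ (F j k) x (Pi.single a 1) :=
        Finset.sum_congr rfl fun j _ => Finset.sum_congr rfl fun k _ => h1 j k
    _ = ∑ a, ∑ j, ∑ k, w a * u k * v j * fderiv ℝ (F j k) x (Pi.single a 1) := by
        rw [sum_rot (h := fun j k a => w a * u k * v j * fderiv ℝ (F j k) x (Pi.single a 1))]
        rw [sum_rot (h := fun k a j => w a * u k * v j * fderiv ℝ (F j k) x (Pi.single a 1))]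
    _ = ∑ a, ∑ b, ∑ c, w a * u b * v c * fderiv ℝ (F c b) x (Pi.single a 1) :=
        Finset.sum_congr rfl fun a _ => Finset.sum_comm

lemma DGf_cyclic {F : Fin n → Fin n → (Fin n → ℝ) → ℝ}
    (hF : ∀ j k, ContDiff ℝ (⊤ : ℕ∞) (F j k))
    (hclosed : ∀ j k l (q : Fin n → ℝ),
      fderiv ℝ (F k l) q (Pi.single j 1) + fderiv ℝ (F l j) q (Pi.single k 1)
        + fderiv ℝ (F j k) q (Pi.single l 1) = 0)
    (x u v w : Fin n → ℝ) :
    DGf F x w u v + DGf F x u v w + DGf F x v w u = 0 := by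
  rw [DGf_expand hF, DGf_expand hF, DGf_expand hF]
  have h2 : ∑ p : Fin n × Fin n × Fin n,
        u p.1 * v p.2.1 * w p.2.2 * fderiv ℝ (F p.2.2 p.2.1) x (Pi.single p.1 1)
      = ∑ p : Fin n × Fin n × Fin n,
        u p.2.1 * v p.2.2 * w p.1 * fderiv ℝ (F p.1 p.2.2) x (Pi.single p.2.1 1) :=
    (Fintype.sum_equiv ⟨fun p => (p.2.1, p.2.2, p.1), fun p => (p.2.2, p.1, p.2.1),
      fun ⟨a, b, c⟩ => rfl, fun ⟨a, b, c⟩ => rfl⟩ _ _ (fun ⟨a, b, c⟩ => rfl)).symm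
  have h3 : ∑ p : Fin n × Fin n × Fin n,
        v p.1 * w p.2.1 * u p.2.2 * fderiv ℝ (F p.2.2 p.2.1) x (Pi.single p.1 1)
      = ∑ p : Fin n × Fin n × Fin n,
        v p.2.2 * w p.1 * u p.2.1 * fderiv ℝ (F p.2.1 p.1) x (Pi.single p.2.2 1) := by
    exact (Fintype.sum_equiv ⟨fun p => (p.2.2, p.1, p.2.1), fun p => (p.2.1, p.2.2, p.1),
      fun ⟨a, b, c⟩ => rfl, fun ⟨a, b, c⟩ => rfl⟩ _ _ (fun ⟨a, b, c⟩ => rfl)).symm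
  rw [h2, h3, ← Finset.sum_add_distrib, ← Finset.sum_add_distrib]
  apply Finset.sum_eq_zero
  rintro ⟨a, b, c⟩ -
  have hc := hclosed a c b x
  dsimp only
  linear_combination (w a * u b * v c) * hc


lemma Gf_zero_mid {F : Fin n → Fin n → (Fin n → ℝ) → ℝ} (x v : Fin n → ℝ) :
    Gf F x 0 v = 0 := by
  unfold Gf; apply Finset.sum_eq_zero; intro j _; apply Finset.sum_eq_zero; intro k _; simp

lemma Gf_zero_right {F : Fin n → Fin n → (Fin n → ℝ) → ℝ} (x u : Fin n → ℝ) :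
    Gf F x u 0 = 0 := by
  unfold Gf; apply Finset.sum_eq_zero; intro j _; apply Finset.sum_eq_zero; intro k _; simp

lemma DGf_smul_w {F : Fin n → Fin n → (Fin n → ℝ) → ℝ} (c : ℝ) (x w u v : Fin n → ℝ) :
    DGf F x (c • w) u v = c * DGf F x w u v := by
  unfold DGf
  rw [Finset.mul_sum]
  refine Finset.sum_congr rfl fun j _ => ?_
  rw [Finset.mul_sum]
  refine Finset.sum_congr rfl fun k _ => ?_
  rw [_root_.map_smul]; simp [smul_eq_mul]; ring

lemma Gf_hasDerivAt {F : Fin n → Fin n → (Fin n → ℝ) → ℝ}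
    (hF : ∀ j k, ContDiff ℝ (⊤ : ℕ∞) (F j k))
    {x u v : ℝ → Fin n → ℝ} {x' u' v' : Fin n → ℝ} {τ : ℝ}
    (hx : HasDerivAt x x' τ) (hu : HasDerivAt u u' τ) (hv : HasDerivAt v v' τ) :
    HasDerivAt (fun τ => Gf F (x τ) (u τ) (v τ))
      (DGf F (x τ) x' (u τ) (v τ) + Gf F (x τ) u' (v τ) + Gf F (x τ) (u τ) v') τ := by
  have key : ∀ j k : Fin n, HasDerivAt (fun τ => F j k (x τ) * u τ k * v τ j)
      (fderiv ℝ (F j k) (x τ) x' * u τ k * v τ j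
        + F j k (x τ) * u' k * v τ j + F j k (x τ) * u τ k * v' j) τ := by
    intro j k
    have hFd : HasDerivAt (fun τ => F j k (x τ)) (fderiv ℝ (F j k) (x τ) x') τ :=
      ((((hF j k).differentiable (by simp)) (x τ)).hasFDerivAt).comp_hasDerivAt τ hx
    have huk : HasDerivAt (fun τ => u τ k) (u' k) τ := hasDerivAt_pi.mp hu k
    have hvj : HasDerivAt (fun τ => v τ j) (v' j) τ := hasDerivAt_pi.mp hv j
    have h := (hFd.mul huk).mul hvj
    refine h.congr_deriv ?_
    simp only [Pi.mul_apply]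
    ring
  have hsum : HasDerivAt (fun τ => ∑ j, ∑ k, F j k (x τ) * u τ k * v τ j)
      (∑ j, ∑ k, (fderiv ℝ (F j k) (x τ) x' * u τ k * v τ j
        + F j k (x τ) * u' k * v τ j + F j k (x τ) * u τ k * v' j)) τ :=
    HasDerivAt.fun_sum fun j _ => HasDerivAt.fun_sum fun k _ => key j k
  have hrw : DGf F (x τ) x' (u τ) (v τ) + Gf F (x τ) u' (v τ) + Gf F (x τ) (u τ) v'
      = ∑ j, ∑ k, (fderiv ℝ (F j k) (x τ) x' * u τ k * v τ j
        + F j k (x τ) * u' k * v τ j + F j k (x τ) * u τ k * v' j) := by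
    unfold Gf DGf
    simp only [← Finset.sum_add_distrib]
  rw [hrw]
  exact hsum


lemma cont_slice1 {f : ℝ → ℝ → ℝ} (hf : Continuous (Function.uncurry f)) (t : ℝ) :
    Continuous (f t) := hf.comp (continuous_const.prodMk continuous_id)

lemma cont_slice2 {f : ℝ → ℝ → ℝ} (hf : Continuous (Function.uncurry f)) (r : ℝ) :
    Continuous (fun t => f t r) := hf.comp (continuous_id.prodMk continuous_const)

lemma intInt_add {f g : ℝ → ℝ → ℝ} (hf : Continuous (Function.uncurry f))
    (hg : Continuous (Function.uncurry g)) :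
    ∫ t in (0:ℝ)..1, ∫ r in (0:ℝ)..1, (f t r + g t r)
      = (∫ t in (0:ℝ)..1, ∫ r in (0:ℝ)..1, f t r)
        + ∫ t in (0:ℝ)..1, ∫ r in (0:ℝ)..1, g t r := by
  have h1 : ∀ t : ℝ, ∫ r in (0:ℝ)..1, (f t r + g t r)
      = (∫ r in (0:ℝ)..1, f t r) + ∫ r in (0:ℝ)..1, g t r := fun t =>
    integral_add ((cont_slice1 hf t).intervalIntegrable _ _)
      ((cont_slice1 hg t).intervalIntegrable _ _)
  simp only [h1]
  exact integral_add
    ((continuous_parametric_intervalIntegral_of_continuous' hf 0 1).intervalIntegrable _ _)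
    ((continuous_parametric_intervalIntegral_of_continuous' hg 0 1).intervalIntegrable _ _)

lemma intInt_neg {f : ℝ → ℝ → ℝ} :
    ∫ t in (0:ℝ)..1, ∫ r in (0:ℝ)..1, (-(f t r))
      = -(∫ t in (0:ℝ)..1, ∫ r in (0:ℝ)..1, f t r) := by
  have h1 : ∀ t : ℝ, ∫ r in (0:ℝ)..1, (-(f t r)) = -(∫ r in (0:ℝ)..1, f t r) := fun t =>
    integral_neg
  simp only [h1]
  exact integral_neg

lemma triInt_add {f g : ℝ → ℝ → ℝ} (hf : Continuous (Function.uncurry f))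
    (hg : Continuous (Function.uncurry g)) :
    ∫ s in (0:ℝ)..1, ∫ t in (0:ℝ)..s, (f s t + g s t)
      = (∫ s in (0:ℝ)..1, ∫ t in (0:ℝ)..s, f s t)
        + ∫ s in (0:ℝ)..1, ∫ t in (0:ℝ)..s, g s t := by
  have h1 : ∀ s : ℝ, ∫ t in (0:ℝ)..s, (f s t + g s t)
      = (∫ t in (0:ℝ)..s, f s t) + ∫ t in (0:ℝ)..s, g s t := fun s =>
    integral_add ((cont_slice1 hf s).intervalIntegrable _ _)
      ((cont_slice1 hg s).intervalIntegrable _ _)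
  simp only [h1]
  exact integral_add
    ((continuous_parametric_intervalIntegral_of_continuous hf continuous_id).intervalIntegrable _ _)
    ((continuous_parametric_intervalIntegral_of_continuous hg continuous_id).intervalIntegrable _ _)

lemma triInt_neg {f : ℝ → ℝ → ℝ} :
    ∫ s in (0:ℝ)..1, ∫ t in (0:ℝ)..s, (-(f s t))
      = -(∫ s in (0:ℝ)..1, ∫ t in (0:ℝ)..s, f s t) := by
  have h1 : ∀ s : ℝ, ∫ t in (0:ℝ)..s, (-(f s t)) = -(∫ t in (0:ℝ)..s, f s t) := fun s =>
    integral_neg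
  simp only [h1]
  exact integral_neg

noncomputable def sigmaF (F : Fin n → Fin n → (Fin n → ℝ) → ℝ) (a b : Fin n → ℝ) : ℝ :=
  ∫ t in (0:ℝ)..1, ∫ r in (0:ℝ)..1,
    r * Gf F (r • (a + t • (b - a))) (b - a) (a + t • (b - a))

lemma cont_sigma_integrand {F : Fin n → Fin n → (Fin n → ℝ) → ℝ}
    (hF : ∀ j k, ContDiff ℝ (⊤ : ℕ∞) (F j k)) (a b : Fin n → ℝ) :
    Continuous (Function.uncurry fun t r : ℝ =>
      r * Gf F (r • (a + t • (b - a))) (b - a) (a + t • (b - a))) := by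
  have hpath : Continuous (fun p : ℝ × ℝ => a + p.1 • (b - a)) :=
    continuous_const.add (continuous_fst.smul continuous_const)
  exact continuous_snd.mul
    (continuous_Gf hF (continuous_snd.smul hpath) continuous_const hpath)

lemma sigma_antisymm {F : Fin n → Fin n → (Fin n → ℝ) → ℝ}
    (hanti : ∀ j k q, F j k q = - F k j q) (a b : Fin n → ℝ) :
    sigmaF F a b = - sigmaF F b a := by
  unfold sigmaF
  have hpt : ∀ t : ℝ, (∫ r in (0:ℝ)..1,
        r * Gf F (r • (a + t • (b - a))) (b - a) (a + t • (b - a)))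
      = -(∫ r in (0:ℝ)..1,
        r * Gf F (r • (b + (1 - t) • (a - b))) (a - b) (b + (1 - t) • (a - b))) := by
    intro t
    have hvec : b + (1 - t) • (a - b) = a + t • (b - a) := by module
    rw [hvec, ← intervalIntegral.integral_neg]
    apply intervalIntegral.integral_congr
    intro r _
    have h3 := Gf_neg_mid (F := F) (r • (a + t • (b - a))) (a - b) (a + t • (b - a))
    rw [show -(a - b) = b - a from by abel] at h3
    dsimp only
    rw [h3]
    ring
  simp only [hpt]
  rw [intervalIntegral.integral_neg, neg_inj]
  have := intervalIntegral.integral_comp_sub_left (a := (0:ℝ)) (b := 1)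
    (fun t => ∫ r in (0:ℝ)..1,
      r * Gf F (r • (b + t • (a - b))) (a - b) (b + t • (a - b))) 1
  simpa using this

noncomputable def Xp (p d1 d2 : Fin n → ℝ) (s t : ℝ) : Fin n → ℝ := p + s • d1 + t • d2

noncomputable def Af (F : Fin n → Fin n → (Fin n → ℝ) → ℝ) (p d1 d2 : Fin n → ℝ)
    (r s t : ℝ) : ℝ := r ^ 2 * Gf F (r • Xp p d1 d2 s t) d1 d2

noncomputable def DAf (F : Fin n → Fin n → (Fin n → ℝ) → ℝ) (p d1 d2 : Fin n → ℝ)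
    (r s t : ℝ) : ℝ :=
  2 * r * Gf F (r • Xp p d1 d2 s t) d1 d2
    + r ^ 2 * DGf F (r • Xp p d1 d2 s t) (Xp p d1 d2 s t) d1 d2

noncomputable def Kf (F : Fin n → Fin n → (Fin n → ℝ) → ℝ) (p d1 d2 : Fin n → ℝ)
    (r s t : ℝ) : ℝ := Gf F (r • Xp p d1 d2 s t) d2 (Xp p d1 d2 s t)

noncomputable def DKf (F : Fin n → Fin n → (Fin n → ℝ) → ℝ) (p d1 d2 : Fin n → ℝ)
    (r s t : ℝ) : ℝ :=
  r * DGf F (r • Xp p d1 d2 s t) d1 d2 (Xp p d1 d2 s t) + Gf F (r • Xp p d1 d2 s t) d2 d1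

noncomputable def Hf (F : Fin n → Fin n → (Fin n → ℝ) → ℝ) (p d1 d2 : Fin n → ℝ)
    (r s t : ℝ) : ℝ := Gf F (r • Xp p d1 d2 s t) (Xp p d1 d2 s t) d1

noncomputable def DHf (F : Fin n → Fin n → (Fin n → ℝ) → ℝ) (p d1 d2 : Fin n → ℝ)
    (r s t : ℝ) : ℝ :=
  r * DGf F (r • Xp p d1 d2 s t) d2 (Xp p d1 d2 s t) d1 + Gf F (r • Xp p d1 d2 s t) d2 d1

section cont
variable {α : Type*} [TopologicalSpace α] {F : Fin n → Fin n → (Fin n → ℝ) → ℝ}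
variable {R S T : α → ℝ}

lemma cont_Xc (p d1 d2 : Fin n → ℝ) (hS : Continuous S) (hT : Continuous T) :
    Continuous fun a => Xp p d1 d2 (S a) (T a) := by
  unfold Xp
  exact (continuous_const.add (hS.smul continuous_const)).add (hT.smul continuous_const)

variable (p d1 d2 : Fin n → ℝ)

lemma cont_DAc (hF : ∀ j k, ContDiff ℝ (⊤ : ℕ∞) (F j k)) (hR : Continuous R) (hS : Continuous S) (hT : Continuous T) : Continuous fun a => DAf F p d1 d2 (R a) (S a) (T a) := by
  unfold DAf
  have hXc := cont_Xc p d1 d2 hS hT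
  exact ((continuous_const.mul hR).mul
      (continuous_Gf hF (hR.smul hXc) continuous_const continuous_const)).add
    ((hR.pow 2).mul (continuous_DGf hF (hR.smul hXc) hXc continuous_const continuous_const))

lemma cont_Kc (hF : ∀ j k, ContDiff ℝ (⊤ : ℕ∞) (F j k)) (hR : Continuous R) (hS : Continuous S) (hT : Continuous T) : Continuous fun a => Kf F p d1 d2 (R a) (S a) (T a) := by
  unfold Kf
  have hXc := cont_Xc p d1 d2 hS hT
  exact continuous_Gf hF (hR.smul hXc) continuous_const hXc

lemma cont_DKc (hF : ∀ j k, ContDiff ℝ (⊤ : ℕ∞) (F j k)) (hR : Continuous R) (hS : Continuous S) (hT : Continuous T) : Continuous fun a => DKf F p d1 d2 (R a) (S a) (T a) := by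
  unfold DKf
  have hXc := cont_Xc p d1 d2 hS hT
  exact (hR.mul (continuous_DGf hF (hR.smul hXc) continuous_const continuous_const hXc)).add
    (continuous_Gf hF (hR.smul hXc) continuous_const continuous_const)

lemma cont_Hc (hF : ∀ j k, ContDiff ℝ (⊤ : ℕ∞) (F j k)) (hR : Continuous R) (hS : Continuous S) (hT : Continuous T) : Continuous fun a => Hf F p d1 d2 (R a) (S a) (T a) := by
  unfold Hf
  have hXc := cont_Xc p d1 d2 hS hT
  exact continuous_Gf hF (hR.smul hXc) hXc continuous_const

lemma cont_DHc (hF : ∀ j k, ContDiff ℝ (⊤ : ℕ∞) (F j k)) (hR : Continuous R) (hS : Continuous S) (hT : Continuous T) : Continuous fun a => DHf F p d1 d2 (R a) (S a) (T a) := by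
  unfold DHf
  have hXc := cont_Xc p d1 d2 hS hT
  exact (hR.mul (continuous_DGf hF (hR.smul hXc) continuous_const hXc continuous_const)).add
    (continuous_Gf hF (hR.smul hXc) continuous_const continuous_const)

end cont

section derivs
variable {F : Fin n → Fin n → (Fin n → ℝ) → ℝ}

lemma Xp_hasDerivAt_s (p d1 d2 : Fin n → ℝ) (t s : ℝ) :
    HasDerivAt (fun s' => Xp p d1 d2 s' t) d1 s := by
  have h := (((hasDerivAt_id s).smul_const d1).const_add p).add_const (t • d2)
  simpa [Xp] using h

lemma Xp_hasDerivAt_t (p d1 d2 : Fin n → ℝ) (s t : ℝ) :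
    HasDerivAt (fun t' => Xp p d1 d2 s t') d2 t := by
  have h := ((hasDerivAt_id t).smul_const d2).const_add (p + s • d1)
  simpa [Xp] using h

lemma hasDerivAt_Af (hF : ∀ j k, ContDiff ℝ (⊤ : ℕ∞) (F j k)) (p d1 d2 : Fin n → ℝ) (r s t : ℝ) :
    HasDerivAt (fun r' => Af F p d1 d2 r' s t) (DAf F p d1 d2 r s t) r := by
  have hx : HasDerivAt (fun r' : ℝ => r' • Xp p d1 d2 s t) ((1:ℝ) • Xp p d1 d2 s t) r :=
    (hasDerivAt_id r).smul_const _
  have h1 := Gf_hasDerivAt hF hx (hasDerivAt_const r d1) (hasDerivAt_const r d2)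
  simp only [one_smul, Gf_zero_mid, Gf_zero_right, add_zero] at h1
  have h2 := (hasDerivAt_pow 2 r).mul h1
  have h2' : HasDerivAt (fun r' => r' ^ 2 * Gf F (r' • Xp p d1 d2 s t) d1 d2)
      (DAf F p d1 d2 r s t) r := by
    refine h2.congr_deriv ?_
    unfold DAf
    norm_num
  exact h2'

lemma hasDerivAt_Kf (hF : ∀ j k, ContDiff ℝ (⊤ : ℕ∞) (F j k)) (p d1 d2 : Fin n → ℝ) (r s t : ℝ) :
    HasDerivAt (fun s' => Kf F p d1 d2 r s' t) (DKf F p d1 d2 r s t) s := by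
  have hxs := Xp_hasDerivAt_s p d1 d2 t s
  have hx : HasDerivAt (fun s' => r • Xp p d1 d2 s' t) (r • d1) s := hxs.const_smul r
  have h1 := Gf_hasDerivAt hF hx (hasDerivAt_const s d2) hxs
  simp only [DGf_smul_w, Gf_zero_mid, add_zero, zero_add] at h1
  exact h1

lemma hasDerivAt_Hf (hF : ∀ j k, ContDiff ℝ (⊤ : ℕ∞) (F j k)) (p d1 d2 : Fin n → ℝ) (r s t : ℝ) :
    HasDerivAt (fun t' => Hf F p d1 d2 r s t') (DHf F p d1 d2 r s t) t := by
  have hxt := Xp_hasDerivAt_t p d1 d2 s t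
  have hx : HasDerivAt (fun t' => r • Xp p d1 d2 s t') (r • d2) t := hxt.const_smul r
  have h1 := Gf_hasDerivAt hF hx hxt (hasDerivAt_const t d1)
  simp only [DGf_smul_w, Gf_zero_mid, Gf_zero_right, add_zero, zero_add] at h1
  exact h1

end derivs

lemma intInt_sub {f g : ℝ → ℝ → ℝ} (hf : Continuous (Function.uncurry f))
    (hg : Continuous (Function.uncurry g)) :
    ∫ t in (0:ℝ)..1, ∫ r in (0:ℝ)..1, (f t r - g t r)
      = (∫ t in (0:ℝ)..1, ∫ r in (0:ℝ)..1, f t r)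
        - ∫ t in (0:ℝ)..1, ∫ r in (0:ℝ)..1, g t r := by
  have h1 : ∀ t : ℝ, ∫ r in (0:ℝ)..1, (f t r - g t r)
      = (∫ r in (0:ℝ)..1, f t r) - ∫ r in (0:ℝ)..1, g t r := fun t =>
    integral_sub ((cont_slice1 hf t).intervalIntegrable _ _)
      ((cont_slice1 hg t).intervalIntegrable _ _)
  simp only [h1]
  exact integral_sub
    ((continuous_parametric_intervalIntegral_of_continuous' hf 0 1).intervalIntegrable _ _)
    ((continuous_parametric_intervalIntegral_of_continuous' hg 0 1).intervalIntegrable _ _)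

lemma key {F : Fin n → Fin n → (Fin n → ℝ) → ℝ}
    (hF : ∀ j k, ContDiff ℝ (⊤ : ℕ∞) (F j k))
    (hanti : ∀ j k q, F j k q = - F k j q)
    (hclosed : ∀ j k l (q : Fin n → ℝ),
      fderiv ℝ (F k l) q (Pi.single j 1) + fderiv ℝ (F l j) q (Pi.single k 1)
        + fderiv ℝ (F j k) q (Pi.single l 1) = 0)
    (p d1 d2 : Fin n → ℝ) :
    (∫ s in (0:ℝ)..1, ∫ t in (0:ℝ)..s, Gf F (Xp p d1 d2 s t) d1 d2)
      = -(sigmaF F p (p + d1)) - sigmaF F (p + d1) (p + d1 + d2)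
        + sigmaF F p (p + d1 + d2) := by
  -- pointwise identity from closedness
  have hpt : ∀ r s t : ℝ, DAf F p d1 d2 r s t
      = -(r * DKf F p d1 d2 r s t) + -(r * DHf F p d1 d2 r s t) := by
    intro r s t
    have hcyc := DGf_cyclic hF hclosed (r • Xp p d1 d2 s t) d1 d2 (Xp p d1 d2 s t)
    have hGA := Gf_antisymm hanti (r • Xp p d1 d2 s t) d2 d1
    unfold DAf DKf DHf
    linear_combination r ^ 2 * hcyc + 2 * r * hGA
  -- fundamental theorem of calculus in r
  have step0 : ∀ s t : ℝ, Gf F (Xp p d1 d2 s t) d1 d2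
      = ∫ r in (0:ℝ)..1, DAf F p d1 d2 r s t := by
    intro s t
    rw [intervalIntegral.integral_eq_sub_of_hasDerivAt (f := fun r => Af F p d1 d2 r s t)
      (fun r _ => hasDerivAt_Af hF p d1 d2 r s t)
      ((cont_DAc p d1 d2 hF continuous_id continuous_const
        continuous_const).intervalIntegrable _ _)]
    unfold Af
    norm_num
  have h1 : ∀ s t : ℝ, Gf F (Xp p d1 d2 s t) d1 d2
      = -(∫ r in (0:ℝ)..1, r * DKf F p d1 d2 r s t)
        + -(∫ r in (0:ℝ)..1, r * DHf F p d1 d2 r s t) := by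
    intro s t
    rw [step0 s t]
    have hiK : IntervalIntegrable (fun r => r * DKf F p d1 d2 r s t) volume 0 1 :=
      (continuous_id.mul (cont_DKc p d1 d2 hF continuous_id continuous_const
        continuous_const)).intervalIntegrable _ _
    have hiH : IntervalIntegrable (fun r => r * DHf F p d1 d2 r s t) volume 0 1 :=
      (continuous_id.mul (cont_DHc p d1 d2 hF continuous_id continuous_const
        continuous_const)).intervalIntegrable _ _
    simp only [hpt]
    have hadd := intervalIntegral.integral_add hiK.neg hiH.neg
    simp only [Pi.neg_apply] at hadd
    rw [hadd, intervalIntegral.integral_neg, intervalIntegral.integral_neg]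
  -- continuity of the two parametric inner integrals
  have hcK2 : Continuous (Function.uncurry
      (fun (q : ℝ × ℝ) (r : ℝ) => r * DKf F p d1 d2 r q.1 q.2)) :=
    continuous_snd.mul (cont_DKc p d1 d2 hF continuous_snd
      (continuous_fst.comp continuous_fst) (continuous_snd.comp continuous_fst))
  have hcH2 : Continuous (Function.uncurry
      (fun (q : ℝ × ℝ) (r : ℝ) => r * DHf F p d1 d2 r q.1 q.2)) :=
    continuous_snd.mul (cont_DHc p d1 d2 hF continuous_snd
      (continuous_fst.comp continuous_fst) (continuous_snd.comp continuous_fst))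
  have hIK : Continuous fun q : ℝ × ℝ => ∫ r in (0:ℝ)..1, r * DKf F p d1 d2 r q.1 q.2 :=
    continuous_parametric_intervalIntegral_of_continuous' hcK2 0 1
  have hIH : Continuous fun q : ℝ × ℝ => ∫ r in (0:ℝ)..1, r * DHf F p d1 d2 r q.1 q.2 :=
    continuous_parametric_intervalIntegral_of_continuous' hcH2 0 1
  have hsplit : (∫ s in (0:ℝ)..1, ∫ t in (0:ℝ)..s, Gf F (Xp p d1 d2 s t) d1 d2)
      = -(∫ s in (0:ℝ)..1, ∫ t in (0:ℝ)..s, (∫ r in (0:ℝ)..1, r * DKf F p d1 d2 r s t))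
        + -(∫ s in (0:ℝ)..1, ∫ t in (0:ℝ)..s,
            (∫ r in (0:ℝ)..1, r * DHf F p d1 d2 r s t)) := by
    calc (∫ s in (0:ℝ)..1, ∫ t in (0:ℝ)..s, Gf F (Xp p d1 d2 s t) d1 d2)
        = ∫ s in (0:ℝ)..1, ∫ t in (0:ℝ)..s,
            (-(∫ r in (0:ℝ)..1, r * DKf F p d1 d2 r s t)
              + -(∫ r in (0:ℝ)..1, r * DHf F p d1 d2 r s t)) := by
          simp only [h1]
      _ = (∫ s in (0:ℝ)..1, ∫ t in (0:ℝ)..s,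
            -(∫ r in (0:ℝ)..1, r * DKf F p d1 d2 r s t))
          + ∫ s in (0:ℝ)..1, ∫ t in (0:ℝ)..s,
            -(∫ r in (0:ℝ)..1, r * DHf F p d1 d2 r s t) :=
          triInt_add hIK.neg hIH.neg
      _ = -(∫ s in (0:ℝ)..1, ∫ t in (0:ℝ)..s, (∫ r in (0:ℝ)..1, r * DKf F p d1 d2 r s t))
          + -(∫ s in (0:ℝ)..1, ∫ t in (0:ℝ)..s,
              (∫ r in (0:ℝ)..1, r * DHf F p d1 d2 r s t)) := by
          rw [triInt_neg (f := fun s t => ∫ r in (0:ℝ)..1, r * DKf F p d1 d2 r s t),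
            triInt_neg (f := fun s t => ∫ r in (0:ℝ)..1, r * DHf F p d1 d2 r s t)]
  -- the K-term: triangle Fubini, rectangle Fubini, then FTC in s
  have hT1 : (∫ s in (0:ℝ)..1, ∫ t in (0:ℝ)..s, (∫ r in (0:ℝ)..1, r * DKf F p d1 d2 r s t))
      = ∫ t in (0:ℝ)..1, ∫ r in (0:ℝ)..1,
          (r * Kf F p d1 d2 r 1 t - r * Kf F p d1 d2 r t t) := by
    rw [tri_swap (f := fun s t => ∫ r in (0:ℝ)..1, r * DKf F p d1 d2 r s t) hIK]
    apply intervalIntegral.integral_congr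
    intro t ht
    rw [Set.uIcc_of_le zero_le_one] at ht
    dsimp only
    have hcKst : Continuous (Function.uncurry fun s r : ℝ => r * DKf F p d1 d2 r s t) :=
      continuous_snd.mul (cont_DKc p d1 d2 hF continuous_snd continuous_fst continuous_const)
    rw [rect_swap (f := fun s r : ℝ => r * DKf F p d1 d2 r s t) hcKst ht.2 zero_le_one]
    apply intervalIntegral.integral_congr
    intro r hr
    dsimp only
    rw [intervalIntegral.integral_const_mul,
      intervalIntegral.integral_eq_sub_of_hasDerivAt (f := fun s => Kf F p d1 d2 r s t)
        (fun s _ => hasDerivAt_Kf hF p d1 d2 r s t)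
        ((cont_DKc p d1 d2 hF continuous_const continuous_id
          continuous_const).intervalIntegrable _ _)]
    ring
  -- the H-term: rectangle Fubini then FTC in t
  have hT2 : (∫ s in (0:ℝ)..1, ∫ t in (0:ℝ)..s, (∫ r in (0:ℝ)..1, r * DHf F p d1 d2 r s t))
      = ∫ s in (0:ℝ)..1, ∫ r in (0:ℝ)..1,
          (r * Hf F p d1 d2 r s s - r * Hf F p d1 d2 r s 0) := by
    apply intervalIntegral.integral_congr
    intro s hs
    rw [Set.uIcc_of_le zero_le_one] at hs
    dsimp only
    have hcHtr : Continuous (Function.uncurry fun t r : ℝ => r * DHf F p d1 d2 r s t) :=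
      continuous_snd.mul (cont_DHc p d1 d2 hF continuous_snd continuous_const continuous_fst)
    rw [rect_swap (f := fun t r : ℝ => r * DHf F p d1 d2 r s t) hcHtr hs.1 zero_le_one]
    apply intervalIntegral.integral_congr
    intro r hr
    dsimp only
    rw [intervalIntegral.integral_const_mul,
      intervalIntegral.integral_eq_sub_of_hasDerivAt (f := fun t => Hf F p d1 d2 r s t)
        (fun t _ => hasDerivAt_Hf hF p d1 d2 r s t)
        ((cont_DHc p d1 d2 hF continuous_const continuous_const
          continuous_id).intervalIntegrable _ _)]
    ring
  -- split into the four elementary double integrals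
  have hcU1 : Continuous (Function.uncurry fun t r : ℝ => r * Kf F p d1 d2 r 1 t) :=
    continuous_snd.mul (cont_Kc p d1 d2 hF continuous_snd continuous_const continuous_fst)
  have hcU2 : Continuous (Function.uncurry fun t r : ℝ => r * Kf F p d1 d2 r t t) :=
    continuous_snd.mul (cont_Kc p d1 d2 hF continuous_snd continuous_fst continuous_fst)
  have hcV1 : Continuous (Function.uncurry fun t r : ℝ => r * Hf F p d1 d2 r t t) :=
    continuous_snd.mul (cont_Hc p d1 d2 hF continuous_snd continuous_fst continuous_fst)
  have hcV2 : Continuous (Function.uncurry fun t r : ℝ => r * Hf F p d1 d2 r t 0) :=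
    continuous_snd.mul (cont_Hc p d1 d2 hF continuous_snd continuous_fst continuous_const)
  have hU : (∫ t in (0:ℝ)..1, ∫ r in (0:ℝ)..1,
        (r * Kf F p d1 d2 r 1 t - r * Kf F p d1 d2 r t t))
      = (∫ t in (0:ℝ)..1, ∫ r in (0:ℝ)..1, r * Kf F p d1 d2 r 1 t)
        - ∫ t in (0:ℝ)..1, ∫ r in (0:ℝ)..1, r * Kf F p d1 d2 r t t :=
    intInt_sub hcU1 hcU2
  have hV : (∫ s in (0:ℝ)..1, ∫ r in (0:ℝ)..1,
        (r * Hf F p d1 d2 r s s - r * Hf F p d1 d2 r s 0))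
      = (∫ t in (0:ℝ)..1, ∫ r in (0:ℝ)..1, r * Hf F p d1 d2 r t t)
        - ∫ t in (0:ℝ)..1, ∫ r in (0:ℝ)..1, r * Hf F p d1 d2 r t 0 :=
    intInt_sub hcV1 hcV2
  -- identify with the cone integrals
  have hU1 : (∫ t in (0:ℝ)..1, ∫ r in (0:ℝ)..1, r * Kf F p d1 d2 r 1 t)
      = sigmaF F (p + d1) (p + d1 + d2) := by
    unfold sigmaF
    apply intervalIntegral.integral_congr
    intro t ht
    dsimp only
    apply intervalIntegral.integral_congr
    intro r hr
    dsimp only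
    have e2 : (p + d1 + d2) - (p + d1) = d2 := by abel
    rw [e2]
    have e1 : (p + d1) + t • d2 = Xp p d1 d2 1 t := by unfold Xp; module
    rw [e1]
    rfl
  have hUV : (∫ t in (0:ℝ)..1, ∫ r in (0:ℝ)..1, r * Kf F p d1 d2 r t t)
        - (∫ t in (0:ℝ)..1, ∫ r in (0:ℝ)..1, r * Hf F p d1 d2 r t t)
      = sigmaF F p (p + d1 + d2) := by
    rw [← intInt_sub hcU2 hcV1]
    unfold sigmaF
    apply intervalIntegral.integral_congr
    intro t ht
    dsimp only
    apply intervalIntegral.integral_congr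
    intro r hr
    dsimp only
    have e2 : (p + d1 + d2) - p = d1 + d2 := by abel
    rw [e2]
    have e1 : p + t • (d1 + d2) = Xp p d1 d2 t t := by unfold Xp; module
    rw [e1]
    have hadd := Gf_add_mid (F := F) (r • Xp p d1 d2 t t) d1 d2 (Xp p d1 d2 t t)
    have hGA := Gf_antisymm hanti (r • Xp p d1 d2 t t) (Xp p d1 d2 t t) d1
    unfold Kf Hf
    linear_combination r * hadd - r * hGA
  have hV2 : (∫ t in (0:ℝ)..1, ∫ r in (0:ℝ)..1, r * Hf F p d1 d2 r t 0)
      = -(sigmaF F p (p + d1)) := by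
    have hstep : (∫ t in (0:ℝ)..1, ∫ r in (0:ℝ)..1, r * Hf F p d1 d2 r t 0)
        = ∫ t in (0:ℝ)..1, ∫ r in (0:ℝ)..1,
            -(r * Gf F (r • (p + t • ((p + d1) - p))) ((p + d1) - p)
              (p + t • ((p + d1) - p))) := by
      apply intervalIntegral.integral_congr
      intro t ht
      dsimp only
      apply intervalIntegral.integral_congr
      intro r hr
      dsimp only
      have e2 : (p + d1) - p = d1 := by abel
      rw [e2]
      have e1 : p + t • d1 = Xp p d1 d2 t 0 := by unfold Xp; module
      rw [e1]
      have hGA := Gf_antisymm hanti (r • Xp p d1 d2 t 0) (Xp p d1 d2 t 0) d1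
      unfold Hf
      linear_combination r * hGA
    rw [hstep, intInt_neg]
    rfl
  rw [hsplit, hT1, hT2, hU, hV]
  linarith [hU1, hUV, hV2]

lemma triFlux_eq {F : Fin n → Fin n → (Fin n → ℝ) → ℝ}
    (hF : ∀ j k, ContDiff ℝ (⊤ : ℕ∞) (F j k))
    (hanti : ∀ j k q, F j k q = - F k j q)
    (hclosed : ∀ j k l (q : Fin n → ℝ),
      fderiv ℝ (F k l) q (Pi.single j 1) + fderiv ℝ (F l j) q (Pi.single k 1)
        + fderiv ℝ (F j k) q (Pi.single l 1) = 0)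
    (v0 v1 v2 : Fin n → ℝ) :
    triFlux F v0 v1 v2 = -(sigmaF F v0 v1) - sigmaF F v1 v2 + sigmaF F v0 v2 := by
  have h := key hF hanti hclosed v0 (v1 - v0) (v2 - v1)
  rw [show v0 + (v1 - v0) = v1 from by abel,
    show v1 + (v2 - v1) = v2 from by abel] at h
  rw [← h]
  unfold triFlux Gf Xp
  simp only [Pi.sub_apply]

end MagAux

open MagAux

/-- The magnetic phase `Φ(b,c) = (1/ℏ) ∫_{Δ(q,q₂,q₁)} F`, where the triangle has side
midpoints `q = q₁ + u₂/2`, `q₂`, `q₁`, i.e. vertices `q₁+q₂-q, q+q₁-q₂, q+q₂-q₁`. -/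
noncomputable def magPhase {n : ℕ} (ℏ : ℝ) (F : Fin n → Fin n → (Fin n → ℝ) → ℝ)
    (b c : (Fin n → ℝ) × (Fin n → ℝ)) : ℝ :=
  (1/ℏ) * triFlux F (c.1 + b.1 - (saddleMul b c).1)
    ((saddleMul b c).1 + c.1 - b.1) ((saddleMul b c).1 + b.1 - c.1)

/-- The magnetic phase given by the flux of a closed 2-form through the
triangle associated to a composable pair is a groupoid 2-cocycle on the saddle
groupoid: it satisfies the cocycle identity and the antisymmetry
`Φ(b,c) = -Φ(c⁻¹, b⁻¹)`. -/
theorem magnetic_phase_is_cocycle {n : ℕ} (ℏ : ℝ) (hℏ : ℏ ≠ 0)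
    (F : Fin n → Fin n → (Fin n → ℝ) → ℝ)
    (hF : ∀ j k, ContDiff ℝ (⊤ : ℕ∞) (F j k))
    (hanti : ∀ j k q, F j k q = - F k j q)
    (hclosed : ∀ j k l (q : Fin n → ℝ),
      fderiv ℝ (F k l) q (Pi.single j 1) + fderiv ℝ (F l j) q (Pi.single k 1)
        + fderiv ℝ (F j k) q (Pi.single l 1) = 0)
    (b c d : (Fin n → ℝ) × (Fin n → ℝ))
    (hdb : SaddleComposable d b) (hbc : SaddleComposable b c) :
    (magPhase ℏ F d (saddleMul b c) - magPhase ℏ F (saddleMul d b) c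
        + magPhase ℏ F b c - magPhase ℏ F d b = 0) ∧
      magPhase ℏ F b c = - magPhase ℏ F (saddleInv c) (saddleInv b) := by
  have hbc' : c.1 + (1/2 : ℝ) • c.2 = b.1 - (1/2 : ℝ) • b.2 := hbc
  have hdb' : b.1 + (1/2 : ℝ) • b.2 = d.1 - (1/2 : ℝ) • d.2 := hdb
  have hc4 : c.2 = (2:ℝ) • (b.1 - c.1) - b.2 := by
    linear_combination (norm := module) (2:ℝ) • hbc'
  have hd4 : d.2 = (2:ℝ) • (d.1 - b.1) - b.2 := by
    linear_combination (norm := module) (2:ℝ) • hdb'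
  -- abbreviations for the four distinguished points
  -- A = c.1 - (1/2)•c.2, B = b.1 - (1/2)•b.2, C = b.1 + (1/2)•b.2, D = d.1 + (1/2)•d.2
  have e_bc : magPhase ℏ F b c = (1/ℏ) * triFlux F (b.1 - (1/2:ℝ) • b.2)
      (c.1 - (1/2:ℝ) • c.2) (b.1 + (1/2:ℝ) • b.2) := by
    unfold magPhase saddleMul
    dsimp only
    rw [show c.1 + b.1 - (c.1 + (1/2:ℝ) • b.2) = b.1 - (1/2:ℝ) • b.2 from by module,
      show (c.1 + (1/2:ℝ) • b.2) + c.1 - b.1 = c.1 - (1/2:ℝ) • c.2 from by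
        rw [hc4]; module,
      show (c.1 + (1/2:ℝ) • b.2) + b.1 - c.1 = b.1 + (1/2:ℝ) • b.2 from by module]
  have e_db : magPhase ℏ F d b = (1/ℏ) * triFlux F (b.1 + (1/2:ℝ) • b.2)
      (b.1 - (1/2:ℝ) • b.2) (d.1 + (1/2:ℝ) • d.2) := by
    unfold magPhase saddleMul
    dsimp only
    rw [show b.1 + d.1 - (b.1 + (1/2:ℝ) • d.2) = b.1 + (1/2:ℝ) • b.2 from by
        rw [hd4]; module,
      show (b.1 + (1/2:ℝ) • d.2) + b.1 - d.1 = b.1 - (1/2:ℝ) • b.2 from by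
        rw [hd4]; module,
      show (b.1 + (1/2:ℝ) • d.2) + d.1 - b.1 = d.1 + (1/2:ℝ) • d.2 from by module]
  have e_dbc : magPhase ℏ F d (saddleMul b c) = (1/ℏ) * triFlux F (b.1 + (1/2:ℝ) • b.2)
      (c.1 - (1/2:ℝ) • c.2) (d.1 + (1/2:ℝ) • d.2) := by
    unfold magPhase saddleMul
    dsimp only
    rw [show (c.1 + (1/2:ℝ) • b.2) + d.1 - ((c.1 + (1/2:ℝ) • b.2) + (1/2:ℝ) • d.2)
          = b.1 + (1/2:ℝ) • b.2 from by rw [hd4]; module,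
      show ((c.1 + (1/2:ℝ) • b.2) + (1/2:ℝ) • d.2) + (c.1 + (1/2:ℝ) • b.2) - d.1
          = c.1 - (1/2:ℝ) • c.2 from by rw [hc4, hd4]; module,
      show ((c.1 + (1/2:ℝ) • b.2) + (1/2:ℝ) • d.2) + d.1 - (c.1 + (1/2:ℝ) • b.2)
          = d.1 + (1/2:ℝ) • d.2 from by module]
  have e_dbc2 : magPhase ℏ F (saddleMul d b) c = (1/ℏ) * triFlux F (b.1 - (1/2:ℝ) • b.2)
      (c.1 - (1/2:ℝ) • c.2) (d.1 + (1/2:ℝ) • d.2) := by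
    unfold magPhase saddleMul
    dsimp only
    rw [show c.1 + (b.1 + (1/2:ℝ) • d.2) - (c.1 + (1/2:ℝ) • (d.2 + b.2))
          = b.1 - (1/2:ℝ) • b.2 from by module,
      show (c.1 + (1/2:ℝ) • (d.2 + b.2)) + c.1 - (b.1 + (1/2:ℝ) • d.2)
          = c.1 - (1/2:ℝ) • c.2 from by rw [hc4]; module,
      show (c.1 + (1/2:ℝ) • (d.2 + b.2)) + (b.1 + (1/2:ℝ) • d.2) - c.1
          = d.1 + (1/2:ℝ) • d.2 from by rw [hd4]; module]
  have e_inv : magPhase ℏ F (saddleInv c) (saddleInv b) = (1/ℏ) * triFlux F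
      (b.1 - (1/2:ℝ) • b.2) (b.1 + (1/2:ℝ) • b.2) (c.1 - (1/2:ℝ) • c.2) := by
    unfold magPhase saddleMul saddleInv
    dsimp only
    rw [show b.1 + c.1 - (b.1 + (1/2:ℝ) • (-c.2)) = b.1 - (1/2:ℝ) • b.2 from by
        rw [hc4]; module,
      show (b.1 + (1/2:ℝ) • (-c.2)) + b.1 - c.1 = b.1 + (1/2:ℝ) • b.2 from by
        rw [hc4]; module,
      show (b.1 + (1/2:ℝ) • (-c.2)) + c.1 - b.1 = c.1 - (1/2:ℝ) • c.2 from by module]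
  have tfe : ∀ x y z : Fin n → ℝ,
      triFlux F x y z = -(sigmaF F x y) - sigmaF F y z + sigmaF F x z :=
    fun x y z => triFlux_eq hF hanti hclosed x y z
  constructor
  · rw [e_dbc, e_dbc2, e_bc, e_db, tfe, tfe, tfe, tfe]
    have s1 := sigma_antisymm hanti (b.1 + (1/2:ℝ) • b.2) (c.1 - (1/2:ℝ) • c.2)
    have s2 := sigma_antisymm hanti (b.1 + (1/2:ℝ) • b.2) (b.1 - (1/2:ℝ) • b.2)
    linear_combination (-(1/ℏ)) * s1 + (1/ℏ) * s2
  · rw [e_bc, e_inv, tfe, tfe]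
    have s1 := sigma_antisymm hanti (b.1 + (1/2:ℝ) • b.2) (c.1 - (1/2:ℝ) • c.2)
    linear_combination (-(1/ℏ)) * s1
end
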